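/- arXiv:2209.11651 — 14 statements merged into one kernel-verified Lean document; each statement's English description precedes it below -/
import Mathlib

section
/- Let V be a finite vertex set, Σ a finite label alphabet, and E a finite index set of edges where each edge e has two distinct endpoints a_e, b_e ∈ V, equipped with nonnegative utility and cost functions u_e, c_e : Σ × Σ → ℝ≥0. For every fractional label assignment λ there exists an integral label assignment ℓ : V → Σ such that u(ℓ) − c(ℓ) ≥ u(λ) − c(λ). -/
/-!
Round every vertex independently, choosing label `α` at `v` with probability `λ_α(v)`.
Since the two endpoints of an edge are distinct, their labels are independent, so the expected
value of `u(ℓ) - c(ℓ)` is exactly `u(λ) - c(λ)`; some outcome is at least its expectation.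
-/

open Finset

lemma exists_sum_mul_le_of_sum_eq_one {ι : Type*} [Fintype ι] {w : ι → ℝ}
    (hw0 : ∀ i, 0 ≤ w i) (hw1 : ∑ i, w i = 1) (f : ι → ℝ) :
    ∃ i, ∑ j, w j * f j ≤ f i := by
  have : Nonempty ι := by
    by_contra h
    simp [not_nonempty_iff.mp h] at hw1
  obtain ⟨i, -, hi⟩ := exists_max_image univ f univ_nonempty
  refine ⟨i, ?_⟩
  calc ∑ j, w j * f j ≤ ∑ j, w j * f i :=
        sum_le_sum fun j _ => mul_le_mul_of_nonneg_left (hi j (mem_univ j)) (hw0 j)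
    _ = f i := by rw [← sum_mul, hw1, one_mul]

namespace IndependentRounding

variable {V S : Type*} [Fintype V] (lam : V → S → ℝ)

def weight (ℓ : V → S) : ℝ := ∏ v, lam v (ℓ v)

variable {lam}

lemma weight_nonneg (hlam0 : ∀ v α, 0 ≤ lam v α) (ℓ : V → S) : 0 ≤ weight lam ℓ :=
  prod_nonneg fun v _ => hlam0 v (ℓ v)

variable [Fintype S] [DecidableEq V]

lemma sum_weight (hsum : ∀ v, ∑ α, lam v α = 1) : ∑ ℓ : V → S, weight lam ℓ = 1 := by
  simp [weight, ← Fintype.prod_sum, hsum]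

lemma sum_weight_mul_indicator [DecidableEq S] (hsum : ∀ v, ∑ α, lam v α = 1)
    {p q : V} (hpq : p ≠ q) (α β : S) :
    ∑ ℓ : V → S, weight lam ℓ * ((if ℓ p = α then 1 else 0) * (if ℓ q = β then 1 else 0)) =
      lam p α * lam q β := by
  -- Absorb the two indicators into the factors at `p` and `q`, then factor the sum.
  set f : V → S → ℝ := fun v s =>
    lam v s * ((if v = p then (if s = α then 1 else 0) else 1) *
      (if v = q then (if s = β then 1 else 0) else 1))
  have hprod (ℓ : V → S) : ∏ v, f v (ℓ v) =
      weight lam ℓ * ((if ℓ p = α then 1 else 0) * (if ℓ q = β then 1 else 0)) := by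
    simp only [f, weight, prod_mul_distrib, prod_ite_eq', mem_univ, if_true]
  have hsum_f (v : V) : ∑ s, f v s =
      (if v = p then lam p α else 1) * (if v = q then lam q β else 1) := by
    by_cases hp : v = p
    · subst hp; simp [f, hpq]
    · by_cases hq : v = q
      · subst hq; simp [f, hp]
      · simp [f, hp, hq, hsum v]
  simp_rw [← hprod, ← Fintype.prod_sum, hsum_f, prod_mul_distrib, prod_ite_eq', mem_univ,
    if_true]

lemma sum_weight_mul_apply (hsum : ∀ v, ∑ α, lam v α = 1) {p q : V} (hpq : p ≠ q)
    (g : S → S → ℝ) :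
    ∑ ℓ : V → S, weight lam ℓ * g (ℓ p) (ℓ q) = ∑ α, ∑ β, lam p α * lam q β * g α β := by
  classical
  have hexpand (ℓ : V → S) : g (ℓ p) (ℓ q) =
      ∑ α, ∑ β, ((if ℓ p = α then 1 else 0) * (if ℓ q = β then 1 else 0)) * g α β := by
    simp [ite_mul]
  simp_rw [hexpand, mul_sum]
  rw [sum_comm]
  refine sum_congr rfl fun α _ => ?_
  rw [sum_comm]
  refine sum_congr rfl fun β _ => ?_
  rw [← sum_weight_mul_indicator hsum hpq α β, sum_mul]
  exact sum_congr rfl fun ℓ _ => (mul_assoc _ _ _).symm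

lemma sum_weight_mul_sum_edges {E : Type*} [Fintype E] (hsum : ∀ v, ∑ α, lam v α = 1)
    {a b : E → V} (hab : ∀ e, a e ≠ b e) (g : E → S → S → ℝ) :
    ∑ ℓ : V → S, weight lam ℓ * ∑ e, g e (ℓ (a e)) (ℓ (b e)) =
      ∑ e, ∑ α, ∑ β, lam (a e) α * lam (b e) β * g e α β := by
  simp_rw [mul_sum]
  rw [sum_comm]
  exact sum_congr rfl fun e _ => sum_weight_mul_apply hsum (hab e) (g e)

end IndependentRounding

open IndependentRounding in
theorem exists_integral_rounding_general
    {V S E : Type*} [Fintype V] [Fintype S] [Fintype E]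
    (a b : E → V) (hab : ∀ e, a e ≠ b e)
    (u c : E → S → S → ℝ)
    (lam : V → S → ℝ)
    (hlam0 : ∀ v α, 0 ≤ lam v α)
    (hsum : ∀ v, ∑ α, lam v α = 1) :
    ∃ ℓ : V → S,
      (∑ e, u e (ℓ (a e)) (ℓ (b e))) - (∑ e, c e (ℓ (a e)) (ℓ (b e))) ≥
        (∑ e, ∑ α, ∑ β, lam (a e) α * lam (b e) β * u e α β) -
        (∑ e, ∑ α, ∑ β, lam (a e) α * lam (b e) β * c e α β) := by
  classical
  obtain ⟨ℓ, hℓ⟩ := exists_sum_mul_le_of_sum_eq_one (weight_nonneg hlam0) (sum_weight hsum)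
    fun ℓ => ∑ e, (u - c) e (ℓ (a e)) (ℓ (b e))
  refine ⟨ℓ, ?_⟩
  rw [sum_weight_mul_sum_edges hsum hab] at hℓ
  simpa only [Pi.sub_apply, mul_sub, sum_sub_distrib] using hℓ

/-- Sequential rounding existence: for every fractional label assignment
there is an integral label assignment with at least the same utility minus cost. -/
theorem exists_integral_rounding
    {V S E : Type*} [Fintype V] [Fintype S] [Fintype E] [Nonempty S]
    (a b : E → V) (hab : ∀ e, a e ≠ b e)
    (u c : E → S → S → ℝ)
    (hu : ∀ e α β, 0 ≤ u e α β) (hc : ∀ e α β, 0 ≤ c e α β)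
    (lam : V → S → ℝ)
    (hlam0 : ∀ v α, 0 ≤ lam v α) (hlam1 : ∀ v α, lam v α ≤ 1)
    (hsum : ∀ v, ∑ α, lam v α = 1) :
    ∃ ℓ : V → S,
      (∑ e, u e (ℓ (a e)) (ℓ (b e))) - (∑ e, c e (ℓ (a e)) (ℓ (b e))) ≥
        (∑ e, ∑ α, ∑ β, lam (a e) α * lam (b e) β * u e α β) -
        (∑ e, ∑ α, ∑ β, lam (a e) α * lam (b e) β * c e α β) :=
  exists_integral_rounding_general a b hab u c lam hlam0 hsum
end

section
/- Let k ≥ 1 be an integer, ε ∈ [0,1], μ ∈ (0,1], set δ := εμ/(6k) and η_i := 1 + (1 − i/k)·εμ/2 for i = 0,…,k. Suppose (u_i)_{i=0}^k and (c_i)_{i=0}^k are nonnegative reals with u_0 − c_0 ≥ μ·u_0, and for every i ∈ {1,…,k}: u_i − η_i·c_i ≥ u_{i−1} − η_i·c_{i−1} − δ·(u_{i−1} + η_i·c_{i−1}). Then u_k − c_k ≥ (1 − ε)·(u_0 − c_0). -/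
/-!
Track the potential `Φ_i = u_i - η_i c_i`. Since `η_{i-1} = η_i + 3δ` and `η ≤ 3/2`, the
extra `δ η_i c_{i-1}` lost in a step is absorbed by lowering the slack, so every step keeps a
`(1 - δ)`-fraction of the previous potential. After `k` steps Bernoulli leaves
`(1 - εμ/6) Φ_0`; at the end `η_k = 1`, while the separation `u_0 - c_0 ≥ μ u_0` gives
`Φ_0 ≥ (1 - ε/2)(u_0 - c_0)`, and `(1 - εμ/6)(1 - ε/2) ≥ 1 - ε`.
-/

open Finset

theorem pow_mul_le_of_forall_mul_le_succ {R : Type*} [Semiring R] [PartialOrder R]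
    [IsOrderedRing R] {Φ : ℕ → R} {r : R} (hr : 0 ≤ r) {n : ℕ}
    (h : ∀ i < n, r * Φ i ≤ Φ (i + 1)) : r ^ n * Φ 0 ≤ Φ n := by
  induction n with
  | zero => simp
  | succ n ih =>
    calc r ^ (n + 1) * Φ 0 = r * (r ^ n * Φ 0) := by rw [pow_succ', mul_assoc]
      _ ≤ r * Φ n := mul_le_mul_of_nonneg_left (ih fun i hi => h i (by omega)) hr
      _ ≤ Φ (n + 1) := h n n.lt_succ_self

theorem one_sub_mul_le_one_sub_pow {δ : ℝ} (hδ : δ ≤ 2) (n : ℕ) :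
    1 - n * δ ≤ (1 - δ) ^ n := by
  simpa [sub_eq_add_neg] using one_add_mul_le_pow (a := -δ) (by linarith) n

theorem one_sub_mul_potential_le {u c u' c' η δ : ℝ} (hc : 0 ≤ c) (hδ : 0 ≤ δ)
    (hη : η ≤ 3 / 2)
    (hstep : u' - (η - 3 * δ) * c' ≥ u - (η - 3 * δ) * c - δ * (u + (η - 3 * δ) * c)) :
    (1 - δ) * (u - η * c) ≤ u' - (η - 3 * δ) * c' := by
  have hloss : 0 ≤ δ * c * (3 / 2 - η) := mul_nonneg (mul_nonneg hδ hc) (sub_nonneg.2 hη)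
  nlinarith [mul_nonneg (mul_nonneg hδ hδ) hc]

theorem one_sub_half_mul_le_potential {u c ε μ : ℝ} (hε : 0 ≤ ε) (hμ : 0 ≤ μ)
    (hu : 0 ≤ u) (hsep : u - c ≥ μ * u) :
    (1 - ε / 2) * (u - c) ≤ u - (1 + ε * μ / 2) * c := by
  have hcu : 0 ≤ u - c := le_trans (mul_nonneg hμ hu) hsep
  have : ε * (μ * u) ≤ ε * (u - c) := mul_le_mul_of_nonneg_left hsep hε
  nlinarith [mul_nonneg (mul_nonneg hε hμ) hcu]

theorem one_sub_le_mul_one_sub {ε μ : ℝ} (hε : 0 ≤ ε) (hμ0 : 0 ≤ μ) (hμ1 : μ ≤ 1) :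
    1 - ε ≤ (1 - ε * μ / 6) * (1 - ε / 2) := by
  nlinarith [mul_nonneg (mul_nonneg hε hε) hμ0, mul_nonneg hε (sub_nonneg.2 hμ1)]

/-- Arithmetic core of the gradual rounding analysis with the
dynamically adapted potentials Φ_i = u_i − η_i·c_i. -/
theorem gradual_rounding_potential
    (k : ℕ) (hk : 1 ≤ k) (ε μ : ℝ) (hε0 : 0 ≤ ε) (hε1 : ε ≤ 1)
    (hμ0 : 0 < μ) (hμ1 : μ ≤ 1)
    (δ : ℝ) (hδ : δ = ε * μ / (6 * k))
    (η : ℕ → ℝ) (hη : ∀ i, η i = 1 + (1 - (i : ℝ) / k) * (ε * μ / 2))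
    (u c : ℕ → ℝ) (hu : ∀ i, 0 ≤ u i) (hc : ∀ i, 0 ≤ c i)
    (hinit : u 0 - c 0 ≥ μ * u 0)
    (hstep : ∀ i ∈ Finset.Icc 1 k,
      u i - η i * c i ≥
        u (i - 1) - η i * c (i - 1) - δ * (u (i - 1) + η i * c (i - 1))) :
    u k - c k ≥ (1 - ε) * (u 0 - c 0) := by
  have hk0 : (k : ℝ) ≠ 0 := by positivity
  have hδ0 : 0 ≤ δ := by rw [hδ]; positivity
  have hkδ : k * δ = ε * μ / 6 := by rw [hδ]; field_simp
  have hεμ : ε * μ ≤ 1 := mul_le_one₀ hε1 hμ0.le hμ1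
  have hδ1 : δ ≤ 1 := by nlinarith [show (1 : ℝ) ≤ k by exact_mod_cast hk]
  have hη_succ (i : ℕ) : η (i + 1) = η i - 3 * δ := by
    rw [hη, hη, hδ]; push_cast; field_simp; ring
  have hη_le (i : ℕ) : η i ≤ 3 / 2 := by
    have : 0 ≤ (i : ℝ) / k * (ε * μ) := by positivity
    rw [hη]; nlinarith
  have hcontract :
      ∀ i < k, (1 - δ) * (u i - η i * c i) ≤ u (i + 1) - η (i + 1) * c (i + 1) := by
    intro i hi
    have := hstep (i + 1) (mem_Icc.2 ⟨by omega, hi⟩)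
    rw [Nat.add_sub_cancel, hη_succ] at this
    rw [hη_succ]
    exact one_sub_mul_potential_le (hc i) hδ0 (hη_le i) this
  have hΦ0 : (1 - ε / 2) * (u 0 - c 0) ≤ u 0 - η 0 * c 0 := by
    simpa [hη] using one_sub_half_mul_le_potential hε0 hμ0.le (hu 0) hinit
  have hηk : η k = 1 := by rw [hη, div_self hk0]; ring
  have hsep : 0 ≤ u 0 - c 0 := le_trans (mul_nonneg hμ0.le (hu 0)) hinit
  calc (1 - ε) * (u 0 - c 0) ≤ (1 - ε * μ / 6) * ((1 - ε / 2) * (u 0 - c 0)) := by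
        rw [← mul_assoc]
        exact mul_le_mul_of_nonneg_right (one_sub_le_mul_one_sub hε0 hμ0.le hμ1) hsep
    _ ≤ (1 - δ) ^ k * (u 0 - η 0 * c 0) := by
        rw [← hkδ]
        exact mul_le_mul (one_sub_mul_le_one_sub_pow (by linarith) k) hΦ0
          (mul_nonneg (by linarith) hsep) (pow_nonneg (by linarith) k)
    _ ≤ u k - η k * c k := pow_mul_le_of_forall_mul_le_succ (by linarith) hcontract
    _ = u k - c k := by rw [hηk, one_mul]
end

section
/- Let V be a finite vertex set, Σ a finite label alphabet, and E a finite index set of edges with distinct endpoints a_e, b_e ∈ V and nonnegative utility and cost functions u_e, c_e : Σ × Σ → ℝ≥0. Let λ be a fractional label assignment such that every nonzero value λ_α(v) satisfies λ_α(v) ≥ λ_min for some λ_min ∈ (0,1], let ε ∈ (0,1] and μ ∈ (0,1], and assume u(λ) − c(λ) ≥ μ·u(λ). Let k be the smallest nonnegative integer with 2^k ≥ 9/(ε·μ·λ_min). Then there exists a fractional label assignment λ′ such that every value λ′_α(v) is an integer multiple of 2^{−k}, λ′_α(v) = 0 whenever λ_α(v) = 0, Σ_{α∈Σ} λ′_α(v)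 = 1 for all v, and both u(λ′) − c(λ′) ≥ (1 − ε)·(u(λ) − c(λ)) and u(λ′) − c(λ′) ≥ (μ/2)·u(λ′). -/
/-!
Round every `2^k · λ_α(v)` down, then round up just enough entries of the support of `λ(v)` to
restore the row sum `2^k`. The error per entry of `λ' = (rounded)/2^k` is at most `2^{-k}`,
which is at most `t · λ_α(v)` with `t = εμ/9` because every nonzero entry is at least `λ_min`.
Hence `λ'` lies between `(1 - t)λ` and `(1 + t)λ` entrywise, so by nonnegativity both `u` and `c`
change by a factor in `[(1 - t)², (1 + t)²]`, and the separation `c ≤ (1 - μ)u` absorbs the loss.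
-/

open Finset

/-- Utility (or cost) of a fractional label assignment with respect to
edge functions `f e : Σ × Σ → ℝ`. -/
noncomputable def fracTotal {V S E : Type*} [Fintype S] [Fintype E]
    (a b : E → V) (f : E → S → S → ℝ) (lam : V → S → ℝ) : ℝ :=
  ∑ e, ∑ α, ∑ β, lam (a e) α * lam (b e) β * f e α β

theorem exists_nat_sum_eq_abs_sub_le_one {ι : Type*} [Fintype ι] (x : ι → ℝ)
    (hx : ∀ i, 0 ≤ x i) (n : ℕ) (hsum : ∑ i, x i = n) :
    ∃ g : ι → ℕ, ∑ i, g i = n ∧ (∀ i, x i = 0 → g i = 0) ∧ ∀ i, |(g i : ℝ) - x i| ≤ 1 := by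
  classical
  have hfloor_sum : ∑ i, ⌊x i⌋₊ ≤ n := by
    have : ∑ i, (⌊x i⌋₊ : ℝ) ≤ n := hsum ▸ sum_le_sum fun i _ => Nat.floor_le (hx i)
    exact_mod_cast this
  -- The deficit is the sum of the fractional parts, each at most 1 and zero off the support.
  have hdeficit : n - ∑ i, ⌊x i⌋₊ ≤ #{i | x i ≠ 0} := by
    have : ∑ i, (x i - ⌊x i⌋₊) ≤ ∑ i, if x i ≠ 0 then (1 : ℝ) else 0 := by
      refine sum_le_sum fun i _ => ?_
      split_ifs with hi
      · linarith [Nat.lt_floor_add_one (x i)]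
      · simp [not_not.1 hi]
    rw [sum_sub_distrib, hsum, sum_boole, ← Nat.cast_sum, ← Nat.cast_sub hfloor_sum] at this
    exact_mod_cast this
  obtain ⟨T, hT_supp, hT_card⟩ := exists_subset_card_eq hdeficit
  have hT : ∀ i ∈ T, x i ≠ 0 := fun i hi => (mem_filter.1 (hT_supp hi)).2
  refine ⟨fun i => ⌊x i⌋₊ + if i ∈ T then 1 else 0, ?_, fun i hi => ?_, fun i => ?_⟩
  · simp only [sum_add_distrib, sum_boole, Nat.cast_id, filter_mem_eq_inter, univ_inter, hT_card]
    omega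
  · simpa [hi] using fun h => hT i h hi
  · have hlow := Nat.floor_le (hx i)
    have hhigh := Nat.lt_floor_add_one (x i)
    rw [abs_le]
    by_cases hi : i ∈ T <;> simp only [hi, if_true, if_false] <;> push_cast <;> constructor <;> linarith

theorem exists_dyadic_near {ι : Type*} [Fintype ι] (x : ι → ℝ) (hx : ∀ i, 0 ≤ x i)
    (hsum : ∑ i, x i = 1) (k : ℕ) (t : ℝ) (hfine : ∀ i, x i ≠ 0 → 1 ≤ t * 2 ^ k * x i) :
    ∃ y : ι → ℝ, (∀ i, ∃ m : ℕ, y i = m / 2 ^ k) ∧ (∀ i, x i = 0 → y i = 0) ∧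
      ∑ i, y i = 1 ∧ ∀ i, (1 - t) * x i ≤ y i ∧ y i ≤ (1 + t) * x i := by
  have h2k : (0 : ℝ) < 2 ^ k := by positivity
  obtain ⟨g, hg_sum, hg_zero, hg_near⟩ :=
    exists_nat_sum_eq_abs_sub_le_one (fun i => 2 ^ k * x i)
      (fun i => mul_nonneg h2k.le (hx i)) (2 ^ k) (by rw [← mul_sum, hsum]; push_cast; ring)
  refine ⟨fun i => g i / 2 ^ k, fun i => ⟨g i, rfl⟩, fun i hi => ?_, ?_, fun i => ?_⟩
  · simp [hg_zero i (by simp [hi])]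
  · rw [← sum_div, div_eq_one_iff_eq h2k.ne']
    exact_mod_cast hg_sum
  · by_cases hi : x i = 0
    · simp [hi, hg_zero i (by simp [hi])]
    · have hone := hfine i hi
      obtain ⟨hlow, hhigh⟩ := abs_le.1 (hg_near i)
      rw [le_div_iff₀ h2k, div_le_iff₀ h2k]
      constructor <;> nlinarith

section fracTotal

variable {V S E : Type*} [Fintype S] [Fintype E] (a b : E → V) {f : E → S → S → ℝ}

theorem fracTotal_nonneg (hf : ∀ e α β, 0 ≤ f e α β) {lam : V → S → ℝ}
    (hlam : ∀ v α, 0 ≤ lam v α) : 0 ≤ fracTotal a b f lam :=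
  sum_nonneg fun e _ => sum_nonneg fun α _ => sum_nonneg fun β _ =>
    mul_nonneg (mul_nonneg (hlam _ _) (hlam _ _)) (hf e α β)

theorem fracTotal_mono (hf : ∀ e α β, 0 ≤ f e α β) {lam lam' : V → S → ℝ}
    (hlam : ∀ v α, 0 ≤ lam v α) (hle : ∀ v α, lam v α ≤ lam' v α) :
    fracTotal a b f lam ≤ fracTotal a b f lam' := by
  unfold fracTotal
  gcongr with e _ α _ β _
  exacts [hf e α β, hlam _ _, (hlam _ _).trans (hle _ _), hle _ _, hle _ _]

theorem fracTotal_const_mul (f : E → S → S → ℝ) (r : ℝ) (lam : V → S → ℝ) :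
    fracTotal a b f (fun v α => r * lam v α) = r ^ 2 * fracTotal a b f lam := by
  simp only [fracTotal, mul_sum]
  exact sum_congr rfl fun _ _ => sum_congr rfl fun _ _ => sum_congr rfl fun _ _ => by ring

theorem fracTotal_bounds_of_near (hf : ∀ e α β, 0 ≤ f e α β) {lam lam' : V → S → ℝ} {t : ℝ}
    (ht : t ≤ 1) (hlam : ∀ v α, 0 ≤ lam v α)
    (hnear : ∀ v α, (1 - t) * lam v α ≤ lam' v α ∧ lam' v α ≤ (1 + t) * lam v α) :
    (1 - t) ^ 2 * fracTotal a b f lam ≤ fracTotal a b f lam' ∧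
      fracTotal a b f lam' ≤ (1 + t) ^ 2 * fracTotal a b f lam := by
  have hlow : ∀ v α, 0 ≤ (1 - t) * lam v α := fun v α => mul_nonneg (by linarith) (hlam v α)
  rw [← fracTotal_const_mul, ← fracTotal_const_mul]
  exact ⟨fracTotal_mono a b hf hlow fun v α => (hnear v α).1,
    fracTotal_mono a b hf (fun v α => (hlow v α).trans (hnear v α).1) fun v α => (hnear v α).2⟩

end fracTotal

section Perturbation

variable {U C U' C' ε μ t : ℝ}

theorem one_sub_mul_sub_le_sub_of_perturb (hU : 0 ≤ U) (hCU : C ≤ (1 - μ) * U)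
    (hε : 0 ≤ ε) (hμ : 0 ≤ μ) (ht : 0 ≤ t) (htεμ : 4 * t ≤ ε * μ)
    (hU' : (1 - t) ^ 2 * U ≤ U') (hC' : C' ≤ (1 + t) ^ 2 * C) :
    (1 - ε) * (U - C) ≤ U' - C' := by
  have hcoef : (ε + 2 * t + t ^ 2) * (1 - μ) ≤ ε - 2 * t + t ^ 2 := by
    nlinarith [mul_nonneg hμ (by positivity : 0 ≤ 2 * t + t ^ 2)]
  nlinarith [mul_le_mul_of_nonneg_left hCU (by positivity : 0 ≤ ε + 2 * t + t ^ 2),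
    mul_le_mul_of_nonneg_right hcoef hU]

theorem half_mul_le_sub_of_perturb (hU : 0 ≤ U) (hCU : C ≤ (1 - μ) * U) (ht : 0 ≤ t)
    (htμ : 8 * t ≤ μ) (hU'low : (1 - t) ^ 2 * U ≤ U') (hU'high : U' ≤ (1 + t) ^ 2 * U)
    (hC' : C' ≤ (1 + t) ^ 2 * C) :
    μ / 2 * U' ≤ U' - C' := by
  have hcoef : (1 + t) ^ 2 * (1 - μ / 2) ≤ (1 - t) ^ 2 := by
    nlinarith [mul_nonneg (by linarith : 0 ≤ μ) (by positivity : 0 ≤ 2 * t + t ^ 2)]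
  nlinarith [mul_le_mul_of_nonneg_left hCU (by positivity : 0 ≤ (1 + t) ^ 2),
    mul_le_mul_of_nonneg_left hU'high (by linarith : 0 ≤ μ / 2),
    mul_le_mul_of_nonneg_right hcoef hU]

end Perturbation

theorem exists_dyadic_fractional_rounding_general
    {V S E : Type*} [Fintype S] [Fintype E]
    (a b : E → V)
    (u c : E → S → S → ℝ)
    (hu : ∀ e α β, 0 ≤ u e α β) (hc : ∀ e α β, 0 ≤ c e α β)
    (lam : V → S → ℝ)
    (hlam0 : ∀ v α, 0 ≤ lam v α)
    (hsum : ∀ v, ∑ α, lam v α = 1)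
    (lmin : ℝ) (hlmin0 : 0 < lmin)
    (hmin : ∀ v α, lam v α ≠ 0 → lmin ≤ lam v α)
    (ε μ : ℝ) (hε0 : 0 < ε) (hε1 : ε ≤ 1) (hμ0 : 0 < μ) (hμ1 : μ ≤ 1)
    (hsep : fracTotal a b u lam - fracTotal a b c lam ≥ μ * fracTotal a b u lam)
    (k : ℕ) (hk : (2 : ℝ) ^ k ≥ 9 / (ε * μ * lmin)) :
    ∃ lam' : V → S → ℝ,
      (∀ v α, ∃ m : ℕ, lam' v α = (m : ℝ) / 2 ^ k) ∧
      (∀ v α, lam v α = 0 → lam' v α = 0) ∧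
      (∀ v, ∑ α, lam' v α = 1) ∧
      fracTotal a b u lam' - fracTotal a b c lam' ≥
        (1 - ε) * (fracTotal a b u lam - fracTotal a b c lam) ∧
      fracTotal a b u lam' - fracTotal a b c lam' ≥
        (μ / 2) * fracTotal a b u lam' := by
  set t := ε * μ / 9 with ht
  have ht0 : 0 ≤ t := by positivity
  have htμ : 9 * t ≤ μ := by rw [ht]; nlinarith
  have hfine : ∀ v α, lam v α ≠ 0 → 1 ≤ t * 2 ^ k * lam v α := fun v α hv => by
    rw [ge_iff_le, div_le_iff₀ (by positivity)] at hk
    rw [ht]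
    nlinarith [mul_le_mul_of_nonneg_left (hmin v α hv) (by positivity : (0 : ℝ) ≤ 2 ^ k * ε * μ)]
  choose lam' hdyadic hzero hsum' hnear using
    fun v => exists_dyadic_near (lam v) (hlam0 v) (hsum v) k t (hfine v)
  obtain ⟨hUlow, hUhigh⟩ := fracTotal_bounds_of_near a b hu (by linarith) hlam0 hnear
  obtain ⟨-, hChigh⟩ := fracTotal_bounds_of_near a b hc (by linarith) hlam0 hnear
  have hU := fracTotal_nonneg a b hu hlam0
  have hCU : fracTotal a b c lam ≤ (1 - μ) * fracTotal a b u lam := by linarith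
  exact ⟨lam', hdyadic, hzero, hsum',
    one_sub_mul_sub_le_sub_of_perturb hU hCU hε0.le hμ0.le ht0 (by linarith) hUlow hChigh,
    half_mul_le_sub_of_perturb hU hCU ht0 (by linarith) hUlow hUhigh hChigh⟩

/-- Preprocessing lemma: an arbitrary fractional label assignment with
nonzero values at least `lmin` and separation `u(λ) − c(λ) ≥ μ·u(λ)` can be rounded
to a `1/2^k`-integral fractional assignment (for the smallest `k` with
`2^k ≥ 9/(ε·μ·λ_min)`) approximately preserving `u − c` and the separation. -/
theorem exists_dyadic_fractional_rounding
    {V S E : Type*} [Fintype V] [Fintype S] [Fintype E] [Nonempty S]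
    (a b : E → V) (hab : ∀ e, a e ≠ b e)
    (u c : E → S → S → ℝ)
    (hu : ∀ e α β, 0 ≤ u e α β) (hc : ∀ e α β, 0 ≤ c e α β)
    (lam : V → S → ℝ)
    (hlam0 : ∀ v α, 0 ≤ lam v α) (hlam1 : ∀ v α, lam v α ≤ 1)
    (hsum : ∀ v, ∑ α, lam v α = 1)
    (lmin : ℝ) (hlmin0 : 0 < lmin) (hlmin1 : lmin ≤ 1)
    (hmin : ∀ v α, lam v α ≠ 0 → lmin ≤ lam v α)
    (ε μ : ℝ) (hε0 : 0 < ε) (hε1 : ε ≤ 1) (hμ0 : 0 < μ) (hμ1 : μ ≤ 1)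
    (hsep : fracTotal a b u lam - fracTotal a b c lam ≥ μ * fracTotal a b u lam)
    (k : ℕ) (hk : (2 : ℝ) ^ k ≥ 9 / (ε * μ * lmin))
    (hkmin : ∀ j : ℕ, (2 : ℝ) ^ j ≥ 9 / (ε * μ * lmin) → k ≤ j) :
    ∃ lam' : V → S → ℝ,
      (∀ v α, ∃ m : ℕ, lam' v α = (m : ℝ) / 2 ^ k) ∧
      (∀ v α, lam v α = 0 → lam' v α = 0) ∧
      (∀ v, ∑ α, lam' v α = 1) ∧
      fracTotal a b u lam' - fracTotal a b c lam' ≥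
        (1 - ε) * (fracTotal a b u lam - fracTotal a b c lam) ∧
      fracTotal a b u lam' - fracTotal a b c lam' ≥
        (μ / 2) * fracTotal a b u lam' :=
  exists_dyadic_fractional_rounding_general a b u c hu hc lam hlam0 hsum lmin hlmin0 hmin ε μ hε0
    hε1 hμ0 hμ1 hsep k hk
end

section
/- Let G = (V,E) be a finite simple graph with vertex weights w : V → ℝ≥0 and let x : V → {0,1} be any 0/1 vector. Then there exists an independent set I of G with Σ_{v∈I} w(v) ≥ Σ_{v∈V} w(v)·x_v − Σ_{{u,v}∈E} min{w(u), w(v)}·x_u·x_v. -/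
open Finset

/-!
Let `S` be the support of `x`. While `S` contains an edge `uv` with `w u ≤ w v`, delete `u`:
the weight of `S` drops by `w u`, while the cost drops by at least `min (w u) (w v) = w u`
(the edge `uv` itself, the other edges at `u` having nonnegative cost). So utility minus cost
never decreases, and the process stops at an independent set, whose cost is `0`.
-/

namespace SimpleGraph

variable {V : Type*} (G : SimpleGraph V) [DecidableRel G.Adj]

def edgeMinWeight (w : V → ℝ) (u v : V) : ℝ :=
  if G.Adj u v then min (w u) (w v) else 0

/-- Twice the cost of the indicator vector of `S`: every edge is counted in both orders. -/
def conflictCost (w : V → ℝ) (S : Finset V) : ℝ :=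
  ∑ u ∈ S, ∑ v ∈ S, G.edgeMinWeight w u v

variable {G} {w : V → ℝ}

theorem edgeMinWeight_nonneg (hw : ∀ v, 0 ≤ w v) (u v : V) : 0 ≤ G.edgeMinWeight w u v := by
  unfold edgeMinWeight
  split_ifs
  exacts [le_min (hw u) (hw v), le_rfl]

theorem edgeMinWeight_of_adj_of_le {u v : V} (huv : G.Adj u v) (hle : w u ≤ w v) :
    G.edgeMinWeight w u v = w u ∧ G.edgeMinWeight w v u = w u := by
  simp [edgeMinWeight, huv, huv.symm, hle]

theorem conflictCost_nonneg (hw : ∀ v, 0 ≤ w v) (S : Finset V) : 0 ≤ G.conflictCost w S :=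
  sum_nonneg fun _ _ ↦ sum_nonneg fun _ _ ↦ edgeMinWeight_nonneg hw _ _

theorem conflictCost_erase_add_le [DecidableEq V] (hw : ∀ v, 0 ≤ w v) {S : Finset V}
    {u v : V} (hu : u ∈ S) (hv : v ∈ S) (huv : G.Adj u v) (hle : w u ≤ w v) :
    G.conflictCost w (S.erase u) + 2 * w u ≤ G.conflictCost w S := by
  set f := G.edgeMinWeight w
  have hf : ∀ a b, 0 ≤ f a b := edgeMinWeight_nonneg hw
  obtain ⟨huv', hvu'⟩ := edgeMinWeight_of_adj_of_le huv hle
  have hvS' : v ∈ S.erase u := mem_erase.mpr ⟨huv.ne', hv⟩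
  have hsplit : G.conflictCost w S
      = ∑ b ∈ S, f u b + ∑ a ∈ S.erase u, f a u + G.conflictCost w (S.erase u) := by
    rw [conflictCost, ← add_sum_erase S _ hu, add_assoc, conflictCost, ← sum_add_distrib]
    exact congrArg _ (sum_congr rfl fun a _ ↦ (add_sum_erase S _ hu).symm)
  have hrow : w u ≤ ∑ b ∈ S, f u b := huv' ▸ single_le_sum (fun b _ ↦ hf u b) hv
  have hcol : w u ≤ ∑ a ∈ S.erase u, f a u := hvu' ▸ single_le_sum (fun a _ ↦ hf a u) hvS'
  linarith

theorem exists_isIndepSet_sum_sub_conflictCost_le (hw : ∀ v, 0 ≤ w v) (S : Finset V) :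
    ∃ I : Finset V, G.IsIndepSet I ∧ ∑ v ∈ S, w v - G.conflictCost w S / 2 ≤ ∑ v ∈ I, w v := by
  classical
  induction S using Finset.strongInduction with
  | H S ih =>
    by_cases hS : G.IsIndepSet S
    · exact ⟨S, hS, by linarith [conflictCost_nonneg (G := G) hw S]⟩
    obtain ⟨a, ha, b, hb, -, hab⟩ : ∃ a ∈ S, ∃ b ∈ S, a ≠ b ∧ G.Adj a b := by
      simpa [IsIndepSet, Set.Pairwise] using hS
    obtain ⟨u, hu, v, hv, huv, hle⟩ : ∃ u ∈ S, ∃ v ∈ S, G.Adj u v ∧ w u ≤ w v := by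
      rcases le_total (w a) (w b) with h | h
      exacts [⟨a, ha, b, hb, hab, h⟩, ⟨b, hb, a, ha, hab.symm, h⟩]
    obtain ⟨I, hI, hIS⟩ := ih (S.erase u) (erase_ssubset hu)
    refine ⟨I, hI, ?_⟩
    linarith [sum_erase_add S w hu, conflictCost_erase_add_le hw hu hv huv hle]

end SimpleGraph

theorem exists_independent_set_of_zero_one_vector_general
    {V : Type*} [Fintype V] (G : SimpleGraph V) [DecidableRel G.Adj]
    (w : V → ℝ) (hw : ∀ v, 0 ≤ w v)
    (x : V → ℝ) (hx : ∀ v, x v = 0 ∨ x v = 1) :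
    ∃ I : Finset V, (∀ u ∈ I, ∀ v ∈ I, ¬ G.Adj u v) ∧
      ∑ v ∈ I, w v ≥
        (∑ v, w v * x v) -
          (∑ u, ∑ v, if G.Adj u v then min (w u) (w v) * x u * x v else 0) / 2 := by
  classical
  set S := univ.filter (fun v ↦ x v = 1)
  have hutility : ∑ v, w v * x v = ∑ v ∈ S, w v := by
    rw [sum_filter]
    refine sum_congr rfl fun v _ ↦ ?_
    rcases hx v with h | h <;> simp [h]
  have hcost : (∑ u, ∑ v, if G.Adj u v then min (w u) (w v) * x u * x v else 0)
      = G.conflictCost w S := by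
    simp only [S, SimpleGraph.conflictCost, sum_filter]
    refine sum_congr rfl fun u _ ↦ ?_
    rcases hx u with hu | hu
    · simp [hu]
    · refine (sum_congr rfl fun v _ ↦ ?_).trans (if_pos hu).symm
      rcases hx v with hv | hv <;> simp [hu, hv, SimpleGraph.edgeMinWeight]
  obtain ⟨I, hI, hIS⟩ := G.exists_isIndepSet_sum_sub_conflictCost_le hw S
  refine ⟨I, fun u hu v hv huv ↦ hI hu hv huv.ne huv, ?_⟩
  rw [hutility, hcost]
  exact hIS

/-- From any 0/1 vector one obtains an independent set of weight at
least utility minus cost, where the cost sums `min(w u, w v)·x_u·x_v` over edges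
(each unordered edge counted once, i.e. half the ordered adjacency sum). -/
theorem exists_independent_set_of_zero_one_vector
    {V : Type*} [Fintype V] [DecidableEq V] (G : SimpleGraph V) [DecidableRel G.Adj]
    (w : V → ℝ) (hw : ∀ v, 0 ≤ w v)
    (x : V → ℝ) (hx : ∀ v, x v = 0 ∨ x v = 1) :
    ∃ I : Finset V, (∀ u ∈ I, ∀ v ∈ I, ¬ G.Adj u v) ∧
      ∑ v ∈ I, w v ≥
        (∑ v, w v * x v) -
          (∑ u, ∑ v, if G.Adj u v then min (w u) (w v) * x u * x v else 0) / 2 :=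
  exists_independent_set_of_zero_one_vector_general G w hw x hx
end

section
/- Let G = (V,E) be a finite simple graph and fix an orientation of its edges (each edge is assigned a head among its two endpoints). Call a vertex v good if 3·indeg(v) ≥ deg(v), where indeg(v) is the number of edges oriented into v and deg(v) is the degree of v in G. Then Σ_{good v} deg(v) ≥ |E|/2. -/
/-!
Every edge contributes one in-endpoint and one out-endpoint, so the degrees sum to `2|E|` while
the indegrees sum to `|E|`. A bad vertex (`3·indeg v < deg v`) has outdegree above two thirds of
its degree, so the bad vertices carry at most `3/2 · |E|` of the `2|E|` edge endpoints, leaving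
at least `|E|/2` for the good ones.
-/

open Finset

theorem Finset.sum_le_four_mul_sum_filter_le_three_mul {ι : Type*} (s : Finset ι) (d i : ι → ℕ)
    (hle : ∀ v ∈ s, i v ≤ d v) (hsum : ∑ v ∈ s, d v = 2 * ∑ v ∈ s, i v) :
    ∑ v ∈ s, d v ≤ 4 * ∑ v ∈ s with d v ≤ 3 * i v, d v := by
  -- chosen so that, summed over `s` with `6 ∑ i = 3 ∑ d`, it becomes `∑ d ≤ 4 ∑_{d ≤ 3 i} d`
  have pointwise : ∀ v ∈ s,
      d v + 6 * i v ≤ 4 * (if d v ≤ 3 * i v then d v else 0) + 3 * d v := by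
    intro v hv
    have := hle v hv
    split_ifs <;> omega
  have summed := sum_le_sum pointwise
  rw [sum_add_distrib, sum_add_distrib, ← mul_sum, ← mul_sum, ← mul_sum, ← sum_filter] at summed
  omega

namespace SimpleGraph

variable {V : Type*} [Fintype V] [DecidableEq V] (G : SimpleGraph V) [DecidableRel G.Adj]

def indegree (head : Sym2 V → V) (v : V) : ℕ :=
  #{e ∈ G.edgeFinset | head e = v}

theorem indegree_le_degree {head : Sym2 V → V} (hhead : ∀ e ∈ G.edgeSet, head e ∈ e) (v : V) :
    G.indegree head v ≤ G.degree v := by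
  rw [← card_incidenceFinset_eq_degree]
  refine card_le_card fun e he => ?_
  obtain ⟨hedge, rfl⟩ := mem_filter.mp he
  rw [mem_edgeFinset] at hedge
  exact (mem_incidenceFinset _ _ _).mpr ⟨hedge, hhead e hedge⟩

theorem sum_indegree_eq_card_edgeFinset (head : Sym2 V → V) :
    ∑ v, G.indegree head v = #G.edgeFinset :=
  (card_eq_sum_card_fiberwise fun e _ => mem_univ (head e)).symm

end SimpleGraph

/-- For any orientation (given by a head function on edges) of a finite
simple graph, the vertices `v` with `3·indeg(v) ≥ deg(v)` ("good" vertices) carry at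
least half of all edge endpoints: `Σ_{good v} deg(v) ≥ |E|/2`. -/
theorem good_vertices_carry_half_edges
    {V : Type*} [Fintype V] [DecidableEq V] (G : SimpleGraph V) [DecidableRel G.Adj]
    (head : Sym2 V → V) (hhead : ∀ e ∈ G.edgeSet, head e ∈ e) :
    (∑ v ∈ Finset.univ.filter
        (fun v => G.degree v ≤ 3 * (G.edgeFinset.filter (fun e => head e = v)).card),
      (G.degree v : ℝ)) ≥ (G.edgeFinset.card : ℝ) / 2 := by
  have hdeg : ∑ v, G.degree v = 2 * ∑ v, G.indegree head v := by
    rw [G.sum_degrees_eq_twice_card_edges, G.sum_indegree_eq_card_edgeFinset]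
  have hquarter := univ.sum_le_four_mul_sum_filter_le_three_mul _ _
    (fun v _ => G.indegree_le_degree hhead v) hdeg
  rw [G.sum_degrees_eq_twice_card_edges] at hquarter
  have hreal : (2 * #G.edgeFinset : ℝ) ≤ 4 * ∑ v ∈ univ with G.degree v ≤ 3 * G.indegree head v,
      (G.degree v : ℝ) := by
    exact_mod_cast hquarter
  unfold SimpleGraph.indegree at hreal
  linarith
end

section
/- Let G = (V,E) be a finite simple graph with no isolated vertices and injective identifiers ID : V → ℕ; orient each edge {u,v} from u to v iff (deg(u), ID(u)) < (deg(v), ID(v)) lexicographically, and let IN(v), OUT(v) denote in- and out-neighbors. Set x_v := 1/(20·deg(v)). Call v good if 3·|IN(v)| ≥ deg(v), and suppose for each good vertex v we are given a set S_v ⊆ IN(v) with 1/60 ≤ Σ_{u∈S_v} x_u ≤ 4/60. Define u(x) := Σ_{good v} (deg(v)/2)·Σ_{u∈S_v} x_u and c(x) := Σ_{good v} (deg(v)/2)·( Σ_{u∈S_v} Σ_{u′∈S_v} x_u·x_{u′} + Σ_{u∈S_v} Σ_{w∈OUT(u)} x_u·x_w ). Then u(x) − c(x) ≥ u(x)/2.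 -/
/-!
For each good vertex `v` write `σ_v = ∑_{u ∈ S_v} x_u ≤ 4/60`. The collision term is `σ_v²`,
and since out-neighbours have at least the degree of their tail, `∑_{w ∈ OUT(u)} x_w ≤ deg u · x_u
= 1/20`, so the out-neighbour term is at most `σ_v / 20`. Hence the cost at `v` is at most
`(4/60 + 1/20) σ_v ≤ σ_v / 2`, and summing with the weights `deg v / 2` gives `c(x) ≤ u(x)/2`.
-/

open Finset

/-- In-neighbors of `v`: neighbors `u` with `(deg u, ID u) < (deg v, ID v)`
lexicographically, i.e. the edge `{u,v}` is oriented `u → v`. -/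
def inNbrs {V : Type*} [Fintype V] [DecidableEq V] (G : SimpleGraph V)
    [DecidableRel G.Adj] (ID : V → ℕ) (v : V) : Finset V :=
  (G.neighborFinset v).filter
    (fun u => G.degree u < G.degree v ∨ (G.degree u = G.degree v ∧ ID u < ID v))

/-- Out-neighbors of `v`: neighbors `w` with `(deg v, ID v) < (deg w, ID w)`
lexicographically, i.e. the edge `{v,w}` is oriented `v → w`. -/
def outNbrs {V : Type*} [Fintype V] [DecidableEq V] (G : SimpleGraph V)
    [DecidableRel G.Adj] (ID : V → ℕ) (v : V) : Finset V :=
  (G.neighborFinset v).filter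
    (fun w => G.degree v < G.degree w ∨ (G.degree v = G.degree w ∧ ID v < ID w))

theorem Finset.sum_mul_sum_add_sum_sum_le {α : Type*} (s : Finset α) (N : α → Finset α)
    (x : α → ℝ) {a b : ℝ} (hx : ∀ u ∈ s, 0 ≤ x u) (ha : ∑ u ∈ s, x u ≤ a)
    (hb : ∀ u ∈ s, ∑ w ∈ N u, x w ≤ b) :
    ∑ u ∈ s, ∑ u' ∈ s, x u * x u' + ∑ u ∈ s, ∑ w ∈ N u, x u * x w ≤
      (a + b) * ∑ u ∈ s, x u := by
  have hσ : 0 ≤ ∑ u ∈ s, x u := sum_nonneg hx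
  have hcollision : ∑ u ∈ s, ∑ u' ∈ s, x u * x u' ≤ a * ∑ u ∈ s, x u := by
    rw [← sum_mul_sum]
    exact mul_le_mul_of_nonneg_right ha hσ
  have hout : ∑ u ∈ s, ∑ w ∈ N u, x u * x w ≤ b * ∑ u ∈ s, x u := by
    rw [mul_sum]
    refine sum_le_sum fun u hu => ?_
    rw [← mul_sum, mul_comm b]
    exact mul_le_mul_of_nonneg_left (hb u hu) (hx u hu)
  linarith

section Orientation

variable {V : Type*} [Fintype V] [DecidableEq V] (G : SimpleGraph V) [DecidableRel G.Adj]
  (ID : V → ℕ)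

theorem degree_le_of_mem_outNbrs {u w : V} (hw : w ∈ outNbrs G ID u) :
    G.degree u ≤ G.degree w := by
  rcases (mem_filter.1 hw).2 with h | h
  · exact h.le
  · exact h.1.le

theorem card_outNbrs_le_degree (u : V) : (outNbrs G ID u).card ≤ G.degree u := by
  rw [← SimpleGraph.card_neighborFinset_eq_degree]
  exact card_le_card (filter_subset _ _)

theorem sum_outNbrs_inv_degree_le_one (u : V) :
    ∑ w ∈ outNbrs G ID u, ((G.degree w : ℝ))⁻¹ ≤ 1 := by
  rcases (outNbrs G ID u).eq_empty_or_nonempty with hempty | ⟨w₀, hw₀⟩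
  · simp [hempty]
  have hdeg : (0 : ℝ) < G.degree u := by
    have : G.Adj u w₀ := (G.mem_neighborFinset u w₀).1 (mem_filter.1 hw₀).1
    exact_mod_cast (G.degree_pos_iff_exists_adj u).2 ⟨w₀, this⟩
  have hterm : ∀ w ∈ outNbrs G ID u, ((G.degree w : ℝ))⁻¹ ≤ (G.degree u : ℝ)⁻¹ :=
    fun w hw => inv_anti₀ hdeg (by exact_mod_cast degree_le_of_mem_outNbrs G ID hw)
  calc ∑ w ∈ outNbrs G ID u, ((G.degree w : ℝ))⁻¹
      ≤ (outNbrs G ID u).card • (G.degree u : ℝ)⁻¹ := sum_le_card_nsmul _ _ _ hterm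
    _ ≤ G.degree u * (G.degree u : ℝ)⁻¹ := by
        rw [nsmul_eq_mul]
        gcongr
        exact_mod_cast card_outNbrs_le_degree G ID u
    _ ≤ 1 := mul_inv_le_one

theorem sum_outNbrs_one_div_mul_degree_le {c : ℝ} (hc : 0 ≤ c) (u : V) :
    ∑ w ∈ outNbrs G ID u, 1 / (c * G.degree w) ≤ 1 / c := by
  simp only [one_div, mul_inv, ← mul_sum]
  simpa using mul_le_mul_of_nonneg_left (sum_outNbrs_inv_degree_le_one G ID u) (inv_nonneg.2 hc)

end Orientation

theorem luby_estimator_separation_general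
    {V : Type*} [Fintype V] [DecidableEq V] (G : SimpleGraph V) [DecidableRel G.Adj]
    (ID : V → ℕ)
    (S : V → Finset V)
    (hS : ∀ v, G.degree v ≤ 3 * (inNbrs G ID v).card →
      S v ⊆ inNbrs G ID v ∧
      1 / 60 ≤ ∑ u ∈ S v, (1 : ℝ) / (20 * G.degree u) ∧
      ∑ u ∈ S v, (1 : ℝ) / (20 * G.degree u) ≤ 4 / 60) :
    (∑ v ∈ Finset.univ.filter (fun v => G.degree v ≤ 3 * (inNbrs G ID v).card),
        (G.degree v : ℝ) / 2 * ∑ u ∈ S v, (1 : ℝ) / (20 * G.degree u)) -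
      (∑ v ∈ Finset.univ.filter (fun v => G.degree v ≤ 3 * (inNbrs G ID v).card),
        (G.degree v : ℝ) / 2 *
          ((∑ u ∈ S v, ∑ u' ∈ S v,
              ((1 : ℝ) / (20 * G.degree u)) * ((1 : ℝ) / (20 * G.degree u'))) +
            ∑ u ∈ S v, ∑ w ∈ outNbrs G ID u,
              ((1 : ℝ) / (20 * G.degree u)) * ((1 : ℝ) / (20 * G.degree w)))) ≥
    (∑ v ∈ Finset.univ.filter (fun v => G.degree v ≤ 3 * (inNbrs G ID v).card),
        (G.degree v : ℝ) / 2 * ∑ u ∈ S v, (1 : ℝ) / (20 * G.degree u)) / 2 := by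
  set x : V → ℝ := fun u => 1 / (20 * G.degree u)
  have hcost : ∀ v ∈ univ.filter (fun v => G.degree v ≤ 3 * (inNbrs G ID v).card),
      (G.degree v : ℝ) / 2 *
          (∑ u ∈ S v, ∑ u' ∈ S v, x u * x u' + ∑ u ∈ S v, ∑ w ∈ outNbrs G ID u, x u * x w) ≤
        (G.degree v : ℝ) / 2 * (∑ u ∈ S v, x u) / 2 := by
    intro v hv
    have hbound := sum_mul_sum_add_sum_sum_le (S v) (outNbrs G ID) x
      (fun u _ => by positivity) (hS v (mem_filter.1 hv).2).2.2
      (fun u _ => sum_outNbrs_one_div_mul_degree_le G ID (by norm_num) u)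
    have hσ : 0 ≤ ∑ u ∈ S v, x u := sum_nonneg fun u _ => by positivity
    rw [mul_div_assoc]
    gcongr
    linarith
  have htotal := sum_le_sum hcost
  rw [← sum_div] at htotal
  linarith

/-- Fractional separation for the pessimistic estimator of one
phase of Luby's MIS algorithm: with `x_v = 1/(20·deg v)` and window sets `S_v`
of in-neighbors of good vertices, we have `u(x) − c(x) ≥ u(x)/2`. -/
theorem luby_estimator_separation
    {V : Type*} [Fintype V] [DecidableEq V] (G : SimpleGraph V) [DecidableRel G.Adj]
    (hdeg : ∀ v, 0 < G.degree v) (ID : V → ℕ) (hID : Function.Injective ID)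
    (S : V → Finset V)
    (hS : ∀ v, G.degree v ≤ 3 * (inNbrs G ID v).card →
      S v ⊆ inNbrs G ID v ∧
      1 / 60 ≤ ∑ u ∈ S v, (1 : ℝ) / (20 * G.degree u) ∧
      ∑ u ∈ S v, (1 : ℝ) / (20 * G.degree u) ≤ 4 / 60) :
    (∑ v ∈ Finset.univ.filter (fun v => G.degree v ≤ 3 * (inNbrs G ID v).card),
        (G.degree v : ℝ) / 2 * ∑ u ∈ S v, (1 : ℝ) / (20 * G.degree u)) -
      (∑ v ∈ Finset.univ.filter (fun v => G.degree v ≤ 3 * (inNbrs G ID v).card),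
        (G.degree v : ℝ) / 2 *
          ((∑ u ∈ S v, ∑ u' ∈ S v,
              ((1 : ℝ) / (20 * G.degree u)) * ((1 : ℝ) / (20 * G.degree u'))) +
            ∑ u ∈ S v, ∑ w ∈ outNbrs G ID u,
              ((1 : ℝ) / (20 * G.degree u)) * ((1 : ℝ) / (20 * G.degree w)))) ≥
    (∑ v ∈ Finset.univ.filter (fun v => G.degree v ≤ 3 * (inNbrs G ID v).card),
        (G.degree v : ℝ) / 2 * ∑ u ∈ S v, (1 : ℝ) / (20 * G.degree u)) / 2 :=
  luby_estimator_separation_general G ID S hS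
end

section
/- Let G = (V,E) be a finite simple graph with maximum degree at most Δ ≥ 1 and vertex weights w : V → ℝ≥0, and let x : V → [0,1] satisfy u(x) ≥ 2·c(x), where u(x) = Σ_{v∈V} w(v)·x_v and c(x) = Σ_{{u,v}∈E} min{w(u), w(v)}·x_u·x_v. For ε ∈ (0,1], define x′_v := x_v + ε/(2Δ) for every v. Then u(x′) − c(x′) ≥ (1/2 − ε/2)·u(x′). -/
/-!
The cost is half the quadratic form `y ⬝ᵥ M *ᵥ y` of the symmetric matrix
`M u v = [u ~ v] · min (w u) (w v)`, and the utility is `w ⬝ᵥ y`. Shifting `x` by `δ • 1`,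
`δ = ε / (2Δ)`, adds `2δ · x ⬝ᵥ M *ᵥ 1 + δ² · 1 ⬝ᵥ M *ᵥ 1` to the form. The `u`-th row sum of `M`
is at most `deg u · w u ≤ Δ · w u`, so the increase of the cost is at most
`δΔ · u(x) + δ²Δ/2 · u(1) ≤ ε/2 · u(x) + ε/4 · δ u(1)`. With `c(x) ≤ u(x)/2` and
`u(x') = u(x) + δ u(1)` this gives `c(x') ≤ (1/2 + ε/2) · u(x')`.
-/

open Finset Matrix

namespace Matrix

variable {n R : Type*} [Fintype n] [CommRing R]

lemma add_dotProduct_mulVec_add_of_isSymm {A : Matrix n n R} (hA : A.IsSymm) (x y : n → R) :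
    (x + y) ⬝ᵥ A *ᵥ (x + y) = x ⬝ᵥ A *ᵥ x + 2 * (x ⬝ᵥ A *ᵥ y) + y ⬝ᵥ A *ᵥ y := by
  have hyx : y ⬝ᵥ A *ᵥ x = x ⬝ᵥ A *ᵥ y := by
    rw [dotProduct_mulVec, ← vecMul_transpose, hA.eq, dotProduct_comm]
  rw [mulVec_add, dotProduct_add, add_dotProduct, add_dotProduct, hyx]
  ring

end Matrix

namespace SimpleGraph

variable {V : Type*} (G : SimpleGraph V) [DecidableRel G.Adj]

def minWeightMatrix (w : V → ℝ) : Matrix V V ℝ :=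
  fun u v => if G.Adj u v then min (w u) (w v) else 0

variable {G}

lemma minWeightMatrix_isSymm (w : V → ℝ) : (G.minWeightMatrix w).IsSymm := by
  ext u v
  simp only [transpose_apply, minWeightMatrix, G.adj_comm u v, min_comm]

variable [Fintype V]

lemma sum_ite_adj_eq_dotProduct_minWeightMatrix_mulVec (w y : V → ℝ) :
    ∑ u, ∑ v, (if G.Adj u v then min (w u) (w v) * y u * y v else 0) =
      y ⬝ᵥ G.minWeightMatrix w *ᵥ y := by
  simp only [dotProduct, mulVec, mul_sum, minWeightMatrix]
  refine sum_congr rfl fun u _ => sum_congr rfl fun v _ => ?_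
  split_ifs <;> ring

lemma sum_minWeightMatrix_row_le (w : V → ℝ) (u : V) :
    ∑ v, G.minWeightMatrix w u v ≤ G.degree u * w u := calc
  ∑ v, G.minWeightMatrix w u v ≤ ∑ v, if G.Adj u v then w u else 0 :=
    sum_le_sum fun v _ => by unfold minWeightMatrix; split_ifs <;> simp
  _ = G.degree u * w u := by
    rw [sum_ite, sum_const, sum_const_zero, add_zero, nsmul_eq_mul, ← neighborFinset_eq_filter,
      card_neighborFinset_eq_degree]

lemma dotProduct_minWeightMatrix_mulVec_one_le {Δ : ℕ} (hdeg : ∀ v, G.degree v ≤ Δ)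
    {w y : V → ℝ} (hw : 0 ≤ w) (hy : 0 ≤ y) :
    y ⬝ᵥ G.minWeightMatrix w *ᵥ 1 ≤ Δ * (w ⬝ᵥ y) := by
  simp only [dotProduct, mul_sum]
  refine sum_le_sum fun u _ => ?_
  calc y u * (G.minWeightMatrix w *ᵥ 1) u = y u * ∑ v, G.minWeightMatrix w u v := by
        simp [mulVec, dotProduct]
    _ ≤ y u * (G.degree u * w u) :=
        mul_le_mul_of_nonneg_left (sum_minWeightMatrix_row_le w u) (hy u)
    _ ≤ y u * (Δ * w u) := by gcongr; exacts [hy u, hw u, hdeg u]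
    _ = Δ * (w u * y u) := by ring

end SimpleGraph

lemma div_two_mul_mul_le {ε : ℝ} (hε : 0 ≤ ε) (Δ : ℕ) : ε / (2 * Δ) * Δ ≤ ε / 2 := by
  rcases Nat.eq_zero_or_pos Δ with rfl | hΔ
  · simp; positivity
  · exact le_of_eq (by field_simp)

theorem shifted_fractional_independent_set_general
    {V : Type*} [Fintype V] (G : SimpleGraph V) [DecidableRel G.Adj]
    (Δ : ℕ) (hdeg : ∀ v, G.degree v ≤ Δ)
    (w : V → ℝ) (hw : ∀ v, 0 ≤ w v)
    (x : V → ℝ) (hx0 : ∀ v, 0 ≤ x v)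
    (ε : ℝ) (hε0 : 0 < ε)
    (hsep : ∑ v, w v * x v ≥
      2 * ((∑ u, ∑ v, if G.Adj u v then min (w u) (w v) * x u * x v else 0) / 2))
    (x' : V → ℝ) (hx' : ∀ v, x' v = x v + ε / (2 * Δ)) :
    (∑ v, w v * x' v) -
        (∑ u, ∑ v, if G.Adj u v then min (w u) (w v) * x' u * x' v else 0) / 2 ≥
      (1 / 2 - ε / 2) * ∑ v, w v * x' v := by
  set δ := ε / (2 * Δ)
  have hδ : 0 ≤ δ := by positivity
  have hδΔ : δ * Δ ≤ ε / 2 := div_two_mul_mul_le hε0.le Δ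
  have hx'_eq : x' = x + δ • 1 := funext fun v => by simp [hx']
  have hU : 0 ≤ w ⬝ᵥ x := dotProduct_nonneg_of_nonneg hw hx0
  have hW : 0 ≤ w ⬝ᵥ 1 := dotProduct_nonneg_of_nonneg hw zero_le_one
  have hcross := G.dotProduct_minWeightMatrix_mulVec_one_le hdeg hw hx0
  have hconst := G.dotProduct_minWeightMatrix_mulVec_one_le hdeg hw zero_le_one
  rw [SimpleGraph.sum_ite_adj_eq_dotProduct_minWeightMatrix_mulVec] at hsep ⊢
  change w ⬝ᵥ x ≥ _ at hsep
  change w ⬝ᵥ x' - _ ≥ (1 / 2 - ε / 2) * (w ⬝ᵥ x')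
  rw [hx'_eq, add_dotProduct_mulVec_add_of_isSymm (G.minWeightMatrix_isSymm w)]
  simp only [dotProduct_add, dotProduct_smul, smul_dotProduct, mulVec_smul, smul_eq_mul]
  nlinarith [mul_le_mul_of_nonneg_left hcross hδ,
    mul_le_mul_of_nonneg_left hconst (mul_nonneg hδ hδ),
    mul_le_mul_of_nonneg_right hδΔ hU, mul_le_mul_of_nonneg_right hδΔ (mul_nonneg hδ hW),
    mul_nonneg hε0.le (mul_nonneg hδ hW)]

/-- Shifting every fractional value up by `ε/(2Δ)` keeps utility minus
cost at least a `(1/2 − ε/2)` fraction of the utility, provided `u(x) ≥ 2·c(x)`.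
Edge sums count each unordered edge once (half the ordered adjacency sum). -/
theorem shifted_fractional_independent_set
    {V : Type*} [Fintype V] (G : SimpleGraph V) [DecidableRel G.Adj]
    (Δ : ℕ) (hΔ : 1 ≤ Δ) (hdeg : ∀ v, G.degree v ≤ Δ)
    (w : V → ℝ) (hw : ∀ v, 0 ≤ w v)
    (x : V → ℝ) (hx0 : ∀ v, 0 ≤ x v) (hx1 : ∀ v, x v ≤ 1)
    (ε : ℝ) (hε0 : 0 < ε) (hε1 : ε ≤ 1)
    (hsep : ∑ v, w v * x v ≥
      2 * ((∑ u, ∑ v, if G.Adj u v then min (w u) (w v) * x u * x v else 0) / 2))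
    (x' : V → ℝ) (hx' : ∀ v, x' v = x v + ε / (2 * Δ)) :
    (∑ v, w v * x' v) -
        (∑ u, ∑ v, if G.Adj u v then min (w u) (w v) * x' u * x' v else 0) / 2 ≥
      (1 / 2 - ε / 2) * ∑ v, w v * x' v :=
  shifted_fractional_independent_set_general G Δ hdeg w hw x hx0 ε hε0 hsep x' hx'
end

section
/- Let G = (V,E) be a finite simple graph with vertex weights w : V → ℝ≥0, and let x : V → ℝ≥0 satisfy Σ_{u∈N⁺(v)} x_u ≤ 1 for every vertex v, where N⁺(v) = {v} ∪ N(v) is the closed neighborhood of v. Then Σ_{{u,v}∈E} min{w(u), w(v)}·x_u·x_v ≤ (1/2)·Σ_{v∈V} w(v)·x_v. -/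
/-!
Bounding `min (w u) (w v)` by `w u`, the edges seen from `u` cost at most
`w u * x u * ∑ v ∈ N(u), x v ≤ w u * x u` by the constraint at `u`; summing over `u`
counts every edge twice, which the `/ 2` on the left compensates.
-/

open Finset

namespace SimpleGraph

variable {V : Type*} (G : SimpleGraph V)

theorem sum_ite_adj_eq_sum_neighborFinset {M : Type*} [AddCommMonoid M] [Fintype V]
    [DecidableRel G.Adj] (u : V) (f : V → M) :
    (∑ v, if G.Adj u v then f v else 0) = ∑ v ∈ G.neighborFinset u, f v := by
  rw [← sum_filter, neighborFinset_eq_filter]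

theorem sum_neighborFinset_min_mul_le (u : V) [Fintype (G.neighborSet u)] {w x : V → ℝ}
    (hwu : 0 ≤ w u) (hx0 : ∀ v, 0 ≤ x v) (hfeas : x u + ∑ v ∈ G.neighborFinset u, x v ≤ 1) :
    ∑ v ∈ G.neighborFinset u, min (w u) (w v) * x u * x v ≤ w u * x u := by
  calc ∑ v ∈ G.neighborFinset u, min (w u) (w v) * x u * x v
      ≤ ∑ v ∈ G.neighborFinset u, w u * x u * x v := by
        gcongr with v
        · exact hx0 v
        · exact hx0 u
        · exact min_le_left _ _
    _ = w u * x u * ∑ v ∈ G.neighborFinset u, x v := (mul_sum _ _ _).symm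
    _ ≤ w u * x u * 1 := by
        gcongr
        · exact mul_nonneg hwu (hx0 u)
        · linarith [hx0 u]
    _ = w u * x u := mul_one _

end SimpleGraph

/-- Every feasible solution of the fractional independent set LP
(closed-neighborhood constraints) has edge cost at most half its utility.
Edge sums count each unordered edge once (half the ordered adjacency sum). -/
theorem lp_feasible_cost_le_half_utility
    {V : Type*} [Fintype V] (G : SimpleGraph V) [DecidableRel G.Adj]
    (w : V → ℝ) (hw : ∀ v, 0 ≤ w v)
    (x : V → ℝ) (hx0 : ∀ v, 0 ≤ x v)
    (hfeas : ∀ v, x v + ∑ u ∈ G.neighborFinset v, x u ≤ 1) :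
    (∑ u, ∑ v, if G.Adj u v then min (w u) (w v) * x u * x v else 0) / 2 ≤
      (1 / 2) * ∑ v, w v * x v := by
  have hcost : (∑ u, ∑ v, if G.Adj u v then min (w u) (w v) * x u * x v else 0) ≤
      ∑ v, w v * x v := by
    refine sum_le_sum fun u _ => ?_
    rw [G.sum_ite_adj_eq_sum_neighborFinset]
    exact G.sum_neighborFinset_min_mul_le u (hw u) hx0 (hfeas u)
  linarith
end

section
/- Let G = (V,E) be a finite simple graph with vertex weights w : V → ℝ≥0 and neighborhood independence at most β ≥ 1, i.e., for every vertex v, every independent subset of N(v) has size at most β. Then for every independent set I of G: Σ_{v∈I} w(v) ≤ β · S*(w), where S*(w) is the supremum of Σ_{v∈V} w(v)·x_v over all x : V → ℝ≥0 satisfying Σ_{u∈N⁺(v)} x_u ≤ 1 for every vertex v (with N⁺(v) = {v} ∪ N(v)). -/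
open Finset

/-- Optimal value `S*(w)` of the fractional independent set relaxation with
closed-neighborhood constraints `Σ_{u ∈ N⁺(v)} x_u ≤ 1`. -/
noncomputable def LPopt {V : Type*} [Fintype V] (G : SimpleGraph V)
    [DecidableRel G.Adj] (w : V → ℝ) : ℝ :=
  sSup {t : ℝ | ∃ x : V → ℝ, (∀ v, 0 ≤ x v) ∧
    (∀ v, x v + ∑ u ∈ G.neighborFinset v, x u ≤ 1) ∧ t = ∑ v, w v * x v}

/-!
Spreading mass `1/β` uniformly over an independent set `I` is a feasible point of the
relaxation: a closed neighborhood `N⁺(v)` meets `I` only in `v` when `v ∈ I`, and otherwise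
in an independent subset of `N(v)`, so in at most `β` vertices. Its objective value is
`(Σ_{v∈I} w v) / β`.
-/

namespace SimpleGraph

variable {V : Type*} [Fintype V] (G : SimpleGraph V) [DecidableRel G.Adj]

def IsFractionalIndepSet (x : V → ℝ) : Prop :=
  (∀ v, 0 ≤ x v) ∧ ∀ v, x v + ∑ u ∈ G.neighborFinset v, x u ≤ 1

variable {G}

theorem IsFractionalIndepSet.le_one {x : V → ℝ} (hx : G.IsFractionalIndepSet x) (v : V) :
    x v ≤ 1 := by
  have : 0 ≤ ∑ u ∈ G.neighborFinset v, x u := sum_nonneg fun u _ => hx.1 u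
  linarith [hx.2 v]

theorem IsFractionalIndepSet.sum_mul_le_sum_abs {x : V → ℝ} (hx : G.IsFractionalIndepSet x)
    (w : V → ℝ) : ∑ v, w v * x v ≤ ∑ v, |w v| :=
  sum_le_sum fun v _ => calc
    w v * x v ≤ |w v| * x v := mul_le_mul_of_nonneg_right (le_abs_self _) (hx.1 v)
    _ ≤ |w v| := mul_le_of_le_one_right (abs_nonneg _) (hx.le_one v)

theorem IsFractionalIndepSet.sum_mul_le_LPopt {x : V → ℝ} (hx : G.IsFractionalIndepSet x)
    (w : V → ℝ) : ∑ v, w v * x v ≤ LPopt G w := by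
  refine le_csSup ⟨∑ v, |w v|, ?_⟩ ⟨x, hx.1, hx.2, rfl⟩
  rintro t ⟨y, hy0, hy1, rfl⟩
  exact IsFractionalIndepSet.sum_mul_le_sum_abs ⟨hy0, hy1⟩ w

variable [DecidableEq V]

theorem isFractionalIndepSet_of_card_closedNbhd_inter_le {I : Finset V} {β : ℕ}
    (hI : ∀ v, #(insert v (G.neighborFinset v) ∩ I) ≤ β) :
    G.IsFractionalIndepSet fun v => if v ∈ I then (β : ℝ)⁻¹ else 0 := by
  refine ⟨fun v => by positivity, fun v => ?_⟩
  rw [← sum_insert (f := fun u => if u ∈ I then (β : ℝ)⁻¹ else 0)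
    (G.notMem_neighborFinset_self v), sum_ite_mem, sum_const, nsmul_eq_mul,
    mul_comm]
  exact inv_mul_le_one_of_le₀ (by exact_mod_cast hI v) (Nat.cast_nonneg β)

theorem card_closedNbhd_inter_le {I : Finset V} {β : ℕ} (hβ : 1 ≤ β)
    (hni : ∀ v : V, ∀ A ⊆ G.neighborFinset v,
      (∀ a ∈ A, ∀ b ∈ A, ¬ G.Adj a b) → A.card ≤ β)
    (hI : ∀ u ∈ I, ∀ v ∈ I, ¬ G.Adj u v) (v : V) :
    #(insert v (G.neighborFinset v) ∩ I) ≤ β := by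
  by_cases hv : v ∈ I
  · have hNI : G.neighborFinset v ∩ I = ∅ := disjoint_iff_inter_eq_empty.1 <|
      Finset.disjoint_left.2 fun u hu huI => hI v hv u huI ((G.mem_neighborFinset v u).1 hu)
    rwa [insert_inter_of_mem hv, hNI, insert_empty, card_singleton]
  · rw [insert_inter_of_notMem hv]
    exact hni v _ inter_subset_left
      fun a ha b hb => hI a (mem_inter.1 ha).2 b (mem_inter.1 hb).2

end SimpleGraph

theorem independent_set_le_beta_LPopt_general
    {V : Type*} [Fintype V] (G : SimpleGraph V) [DecidableRel G.Adj]
    (w : V → ℝ)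
    (β : ℕ) (hβ : 1 ≤ β)
    (hni : ∀ v : V, ∀ A ⊆ G.neighborFinset v,
      (∀ a ∈ A, ∀ b ∈ A, ¬ G.Adj a b) → A.card ≤ β)
    (I : Finset V) (hI : ∀ u ∈ I, ∀ v ∈ I, ¬ G.Adj u v) :
    ∑ v ∈ I, w v ≤ (β : ℝ) * LPopt G w := by
  classical
  have hx := SimpleGraph.isFractionalIndepSet_of_card_closedNbhd_inter_le
    (SimpleGraph.card_closedNbhd_inter_le hβ hni hI)
  have hobj : ∑ v, w v * (if v ∈ I then (β : ℝ)⁻¹ else 0) = (∑ v ∈ I, w v) / β := by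
    simp only [mul_ite, mul_zero, sum_ite_mem, univ_inter, ← div_eq_mul_inv, sum_div]
  rw [← div_le_iff₀' (by positivity), ← hobj]
  exact hx.sum_mul_le_LPopt w

/-- In a graph of neighborhood independence at most `β`, every
independent set has weight at most `β · S*(w)`. -/
theorem independent_set_le_beta_LPopt
    {V : Type*} [Fintype V] [DecidableEq V] (G : SimpleGraph V) [DecidableRel G.Adj]
    (w : V → ℝ) (hw : ∀ v, 0 ≤ w v)
    (β : ℕ) (hβ : 1 ≤ β)
    (hni : ∀ v : V, ∀ A ⊆ G.neighborFinset v,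
      (∀ a ∈ A, ∀ b ∈ A, ¬ G.Adj a b) → A.card ≤ β)
    (I : Finset V) (hI : ∀ u ∈ I, ∀ v ∈ I, ¬ G.Adj u v) :
    ∑ v ∈ I, w v ≤ (β : ℝ) * LPopt G w :=
  independent_set_le_beta_LPopt_general G w β hβ hni I hI
end

section
/- Let G = (V,E) be a finite simple graph with vertex weights w : V → ℝ≥0. Let I_1,…,I_T be independent sets and define weight functions w_1 := w and, for i = 1,…,T, w_{i+1}(u) := max{0, w_i(u) − Σ_{v∈N⁺(u)∩I_i} w_i(v)} for all u ∈ V, where N⁺(u) = {u} ∪ N(u). Assume w_i(v) > 0 for every v ∈ I_i and every i. Then there exists an independent set I ⊆ I_1 ∪ … ∪ I_T of G with Σ_{v∈I} w(v) ≥ Σ_{i=1}^{T} Σ_{v∈I_i} w_i(v). -/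
/-!
Process the rounds backwards, maintaining an independent set `J` built from rounds
`i + 1, …, T` on which `w_{i+1}` is positive and with `w_{i+1}(J)` at least the residual
weight of those rounds. Round `i` adds the vertices of `I_i` having no closed neighbour in `J`.
For `v ∈ J` the `max` in the update is inactive since `w_{i+1}(v) > 0`, so
`w_i(v) = w_{i+1}(v) + w_i(N⁺(v) ∩ I_i)`. Each vertex of `I_i` left out lies in some
`N⁺(v) ∩ I_i` with `v ∈ J` and is paid for by this surplus, so the new set has
`w_i`-weight at least `w_i(I_i) + w_{i+1}(J)`.
-/

open Finset

theorem Finset.sum_biUnion_le_sum_sum {ι α M : Type*} [DecidableEq α] [AddCommMonoid M]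
    [PartialOrder M] [IsOrderedAddMonoid M] {s : Finset ι} {t : ι → Finset α} {f : α → M}
    (hf : ∀ i ∈ s, ∀ x ∈ t i, 0 ≤ f x) :
    ∑ x ∈ s.biUnion t, f x ≤ ∑ i ∈ s, ∑ x ∈ t i, f x := by
  classical
  induction s using Finset.induction_on with
  | empty => simp
  | insert a s ha ih =>
    have hfa : 0 ≤ ∑ x ∈ t a ∩ s.biUnion t, f x :=
      sum_nonneg fun x hx => hf a (mem_insert_self a s) x (mem_inter.1 hx).1
    rw [biUnion_insert, sum_insert ha]
    calc ∑ x ∈ t a ∪ s.biUnion t, f x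
        ≤ ∑ x ∈ t a ∪ s.biUnion t, f x + ∑ x ∈ t a ∩ s.biUnion t, f x :=
          le_add_of_nonneg_right hfa
      _ = ∑ x ∈ t a, f x + ∑ x ∈ s.biUnion t, f x := sum_union_inter
      _ ≤ ∑ x ∈ t a, f x + ∑ i ∈ s, ∑ x ∈ t i, f x :=
          add_le_add_right (ih fun i hi => hf i (mem_insert_of_mem hi)) _

namespace SimpleGraph

variable {V : Type*} [Fintype V] [DecidableEq V] (G : SimpleGraph V) [DecidableRel G.Adj]

def closedNeighborFinset (v : V) : Finset V := insert v (G.neighborFinset v)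

variable {G}

theorem mem_closedNeighborFinset {u v : V} :
    u ∈ G.closedNeighborFinset v ↔ u = v ∨ G.Adj v u := by
  simp [closedNeighborFinset]

variable (G)

def greedyExtend (S J : Finset V) : Finset V :=
  J ∪ S \ J.biUnion G.closedNeighborFinset

variable {G}

theorem greedyExtend_subset (S J : Finset V) : G.greedyExtend S J ⊆ J ∪ S :=
  union_subset_union_right sdiff_subset

theorem sum_greedyExtend (S J : Finset V) (f : V → ℝ) :
    ∑ v ∈ G.greedyExtend S J, f v =
      ∑ v ∈ J, f v + ∑ v ∈ S \ J.biUnion G.closedNeighborFinset, f v := by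
  refine sum_union (disjoint_sdiff.mono_left fun v hv => mem_biUnion.2 ⟨v, hv, ?_⟩)
  exact mem_closedNeighborFinset.2 (Or.inl rfl)

theorem greedyExtend_indep {S J : Finset V} (hS : ∀ u ∈ S, ∀ v ∈ S, ¬ G.Adj u v)
    (hJ : ∀ u ∈ J, ∀ v ∈ J, ¬ G.Adj u v) :
    ∀ u ∈ G.greedyExtend S J, ∀ v ∈ G.greedyExtend S J, ¬ G.Adj u v := by
  have hclosed : ∀ u ∈ J, ∀ v ∈ S \ J.biUnion G.closedNeighborFinset,
      v ∉ G.closedNeighborFinset u := fun u hu v hv hvu =>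
    (mem_sdiff.1 hv).2 (mem_biUnion.2 ⟨u, hu, hvu⟩)
  intro u hu v hv huv
  rcases mem_union.1 hu with hu | hu <;> rcases mem_union.1 hv with hv | hv
  · exact hJ u hu v hv huv
  · exact hclosed u hu v hv (mem_closedNeighborFinset.2 (Or.inr huv))
  · exact hclosed v hv u hu (mem_closedNeighborFinset.2 (Or.inr huv.symm))
  · exact hS u (mem_sdiff.1 hu).1 v (mem_sdiff.1 hv).1 huv

section Residual

variable {S : Finset V} {W W' : V → ℝ}
  (hstep : ∀ u, W' u = max 0 (W u - ∑ v ∈ G.closedNeighborFinset u ∩ S, W v))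
  (hS : ∀ v ∈ S, 0 < W v)
include hstep

theorem eq_residual_add_of_residual_pos {v : V} (hv : 0 < W' v) :
    W v = W' v + ∑ x ∈ G.closedNeighborFinset v ∩ S, W x := by
  rw [hstep] at hv ⊢
  rw [max_eq_right ((lt_max_iff.1 hv).resolve_left (lt_irrefl 0)).le]
  ring

include hS

theorem pos_of_residual_pos {v : V} (hv : 0 < W' v) : 0 < W v := by
  rw [eq_residual_add_of_residual_pos hstep hv]
  exact add_pos_of_pos_of_nonneg hv
    (sum_nonneg fun x hx => (hS x (mem_inter.1 hx).2).le)

theorem pos_on_greedyExtend {J : Finset V} (hJ : ∀ v ∈ J, 0 < W' v) :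
    ∀ v ∈ G.greedyExtend S J, 0 < W v := by
  intro v hv
  rcases mem_union.1 hv with hv | hv
  · exact pos_of_residual_pos hstep hS (hJ v hv)
  · exact hS v (mem_sdiff.1 hv).1

theorem sum_add_sum_residual_le_sum_greedyExtend {J : Finset V} (hJ : ∀ v ∈ J, 0 < W' v) :
    ∑ v ∈ S, W v + ∑ v ∈ J, W' v ≤ ∑ v ∈ G.greedyExtend S J, W v := by
  have hJsum : ∑ v ∈ J, W v =
      ∑ v ∈ J, W' v + ∑ v ∈ J, ∑ x ∈ G.closedNeighborFinset v ∩ S, W x := by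
    rw [← sum_add_distrib]
    exact sum_congr rfl fun v hv => eq_residual_add_of_residual_pos hstep (hJ v hv)
  have hcovered : ∑ x ∈ S ∩ J.biUnion G.closedNeighborFinset, W x ≤
      ∑ v ∈ J, ∑ x ∈ G.closedNeighborFinset v ∩ S, W x := by
    rw [inter_comm, biUnion_inter]
    exact sum_biUnion_le_sum_sum fun v _ x hx => (hS x (mem_inter.1 hx).2).le
  have hsplit := sum_inter_add_sum_sdiff S (J.biUnion G.closedNeighborFinset) W
  rw [sum_greedyExtend]
  linarith

end Residual

section Rounds

variable {I : ℕ → Finset V} {W : ℕ → V → ℝ} {T : ℕ}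
  (hind : ∀ i ∈ Icc 1 T, ∀ u ∈ I i, ∀ v ∈ I i, ¬ G.Adj u v)
  (hWstep : ∀ i ∈ Icc 1 T, ∀ u : V,
    W (i + 1) u = max 0 (W i u - ∑ v ∈ G.closedNeighborFinset u ∩ I i, W i v))
  (hpos : ∀ i ∈ Icc 1 T, ∀ v ∈ I i, 0 < W i v)
include hind hWstep hpos

theorem exists_indep_sum_residual_le {k : ℕ} (hk : 1 ≤ k) (hkT : k ≤ T + 1) :
    ∃ J ⊆ (Icc k T).biUnion I, (∀ u ∈ J, ∀ v ∈ J, ¬ G.Adj u v) ∧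
      (∀ v ∈ J, 0 < W k v) ∧
      ∑ i ∈ Icc k T, ∑ v ∈ I i, W i v ≤ ∑ v ∈ J, W k v := by
  induction hkT using Nat.decreasingInduction with
  | self => exact ⟨∅, empty_subset _, by simp, by simp, by simp⟩
  | of_succ j hjT ih =>
    obtain ⟨J, hJI, hJ, hJpos, hJsum⟩ := ih (hk.trans j.le_succ)
    have hj : j ∈ Icc 1 T := mem_Icc.2 ⟨hk, Nat.lt_succ_iff.1 hjT⟩
    have hIcc : Icc j T = insert j (Icc (j + 1) T) :=
      (insert_Icc_succ_left_eq_Icc (mem_Icc.1 hj).2).symm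
    refine ⟨G.greedyExtend (I j) J, ?_, greedyExtend_indep (hind j hj) hJ,
      pos_on_greedyExtend (hWstep j hj) (hpos j hj) hJpos, ?_⟩
    · refine (greedyExtend_subset _ _).trans (union_subset (hJI.trans ?_) ?_)
      · exact biUnion_subset_biUnion_of_subset_left _ (hIcc ▸ subset_insert _ _)
      · exact subset_biUnion_of_mem I (hIcc ▸ mem_insert_self _ _)
    · have := sum_add_sum_residual_le_sum_greedyExtend (hWstep j hj) (hpos j hj) hJpos
      rw [hIcc, sum_insert (by simp)]
      linarith

end Rounds

end SimpleGraph

open SimpleGraph in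
theorem local_ratio_combining_general
    {V : Type*} [Fintype V] [DecidableEq V] (G : SimpleGraph V) [DecidableRel G.Adj]
    (w : V → ℝ) (T : ℕ)
    (I : ℕ → Finset V)
    (hind : ∀ i ∈ Finset.Icc 1 T, ∀ u ∈ I i, ∀ v ∈ I i, ¬ G.Adj u v)
    (W : ℕ → V → ℝ) (hW1 : ∀ v, W 1 v = w v)
    (hWstep : ∀ i ∈ Finset.Icc 1 T, ∀ u : V,
      W (i + 1) u =
        max 0 (W i u - ∑ v ∈ (insert u (G.neighborFinset u)) ∩ I i, W i v))
    (hpos : ∀ i ∈ Finset.Icc 1 T, ∀ v ∈ I i, 0 < W i v) :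
    ∃ J : Finset V, J ⊆ (Finset.Icc 1 T).biUnion I ∧
      (∀ u ∈ J, ∀ v ∈ J, ¬ G.Adj u v) ∧
      ∑ v ∈ J, w v ≥ ∑ i ∈ Finset.Icc 1 T, ∑ v ∈ I i, W i v := by
  obtain ⟨J, hJI, hJ, -, hsum⟩ :=
    exists_indep_sum_residual_le (G := G) hind hWstep hpos le_rfl (Nat.le_add_left 1 T)
  refine ⟨J, hJI, hJ, ?_⟩
  simpa only [hW1] using hsum

/-- Combining lemma of the local-ratio scheme: given independent sets
`I_1, …, I_T` and residual weights `W_i` (with `W_1 = w` and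
`W_{i+1}(u) = max{0, W_i(u) − Σ_{v ∈ N⁺(u) ∩ I_i} W_i(v)}`), where each selected
vertex has positive residual weight, there is a single independent set
`J ⊆ I_1 ∪ … ∪ I_T` of original weight at least `Σ_i Σ_{v ∈ I_i} W_i(v)`. -/
theorem local_ratio_combining
    {V : Type*} [Fintype V] [DecidableEq V] (G : SimpleGraph V) [DecidableRel G.Adj]
    (w : V → ℝ) (hw : ∀ v, 0 ≤ w v) (T : ℕ)
    (I : ℕ → Finset V)
    (hind : ∀ i ∈ Finset.Icc 1 T, ∀ u ∈ I i, ∀ v ∈ I i, ¬ G.Adj u v)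
    (W : ℕ → V → ℝ) (hW1 : ∀ v, W 1 v = w v)
    (hWstep : ∀ i ∈ Finset.Icc 1 T, ∀ u : V,
      W (i + 1) u =
        max 0 (W i u - ∑ v ∈ (insert u (G.neighborFinset u)) ∩ I i, W i v))
    (hpos : ∀ i ∈ Finset.Icc 1 T, ∀ v ∈ I i, 0 < W i v) :
    ∃ J : Finset V, J ⊆ (Finset.Icc 1 T).biUnion I ∧
      (∀ u ∈ J, ∀ v ∈ J, ¬ G.Adj u v) ∧
      ∑ v ∈ J, w v ≥ ∑ i ∈ Finset.Icc 1 T, ∑ v ∈ I i, W i v :=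
  local_ratio_combining_general G w T I hind W hW1 hWstep hpos
end

section
/- Let G = (V,E) be a finite simple graph with vertex weights w : V → ℝ≥0 and let I be an independent set of G. Define w′(u) := min{ w(u), Σ_{v∈N⁺(u)∩I} w(v) } for every u ∈ V, where N⁺(u) = {u} ∪ N(u). Then for every x : V → ℝ≥0 satisfying Σ_{u∈N⁺(v)} x_u ≤ 1 for all v ∈ V, we have Σ_{v∈V} w′(v)·x_v ≤ Σ_{v∈I} w(v). -/
open Finset

namespace SimpleGraph

variable {V : Type*} [Fintype V] [DecidableEq V] (G : SimpleGraph V) [DecidableRel G.Adj]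

theorem mem_insert_neighborFinset_comm {u v : V} :
    u ∈ insert v (G.neighborFinset v) ↔ v ∈ insert u (G.neighborFinset u) := by
  simp only [mem_insert, mem_neighborFinset, eq_comm, G.adj_comm]

theorem sum_insert_neighborFinset {M : Type*} [AddCommMonoid M] (f : V → M) (v : V) :
    ∑ u ∈ insert v (G.neighborFinset v), f u = f v + ∑ u ∈ G.neighborFinset v, f u :=
  sum_insert (by simp)

theorem sum_sum_insert_neighborFinset_inter_mul {R : Type*} [CommSemiring R]
    (w x : V → R) (I : Finset V) :
    ∑ v, (∑ u ∈ insert v (G.neighborFinset v) ∩ I, w u) * x v =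
      ∑ u ∈ I, w u * ∑ v ∈ insert u (G.neighborFinset u), x v := by
  simp_rw [sum_mul, mul_sum]
  exact sum_comm' fun v u => by
    simp only [mem_univ, true_and, mem_inter, G.mem_insert_neighborFinset_comm (u := u)]

end SimpleGraph

theorem local_ratio_reduced_weight_LP_bound_general
    {V : Type*} [Fintype V] [DecidableEq V] (G : SimpleGraph V) [DecidableRel G.Adj]
    (w : V → ℝ) (hw : ∀ v, 0 ≤ w v)
    (I : Finset V)
    (x : V → ℝ) (hx0 : ∀ v, 0 ≤ x v)
    (hfeas : ∀ v, x v + ∑ u ∈ G.neighborFinset v, x u ≤ 1) :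
    ∑ v, (min (w v) (∑ u ∈ (insert v (G.neighborFinset v)) ∩ I, w u)) * x v ≤
      ∑ v ∈ I, w v := by
  calc ∑ v, (min (w v) (∑ u ∈ (insert v (G.neighborFinset v)) ∩ I, w u)) * x v
      ≤ ∑ v, (∑ u ∈ insert v (G.neighborFinset v) ∩ I, w u) * x v :=
        sum_le_sum fun v _ => mul_le_mul_of_nonneg_right (min_le_right _ _) (hx0 v)
    _ = ∑ u ∈ I, w u * ∑ v ∈ insert u (G.neighborFinset u), x v :=
        G.sum_sum_insert_neighborFinset_inter_mul w x I
    _ ≤ ∑ u ∈ I, w u := sum_le_sum fun u _ =>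
        mul_le_of_le_one_right (hw u) (G.sum_insert_neighborFinset x u ▸ hfeas u)

/-- The LP value of the reduced weights
`w′(u) = min{w(u), Σ_{v ∈ N⁺(u) ∩ I} w(v)}` of one local-ratio step is at most the
weight of the independent set `I`: every feasible LP solution `x` satisfies
`Σ_v w′(v)·x_v ≤ Σ_{v ∈ I} w(v)`. -/
theorem local_ratio_reduced_weight_LP_bound
    {V : Type*} [Fintype V] [DecidableEq V] (G : SimpleGraph V) [DecidableRel G.Adj]
    (w : V → ℝ) (hw : ∀ v, 0 ≤ w v)
    (I : Finset V) (hI : ∀ u ∈ I, ∀ v ∈ I, ¬ G.Adj u v)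
    (x : V → ℝ) (hx0 : ∀ v, 0 ≤ x v)
    (hfeas : ∀ v, x v + ∑ u ∈ G.neighborFinset v, x u ≤ 1) :
    ∑ v, (min (w v) (∑ u ∈ (insert v (G.neighborFinset v)) ∩ I, w u)) * x v ≤
      ∑ v ∈ I, w v :=
  local_ratio_reduced_weight_LP_bound_general G w hw I x hx0 hfeas
end

section
/- Let G = (V,E) be a finite simple graph with vertex weights w : V → ℝ≥0, let ρ ∈ (0,1) and ε ∈ (0,1), and let T be an integer with T ≥ ln(1/ε)/ρ. Let I_1,…,I_T be independent sets with associated weights w_1 := w and w_{i+1}(u) := max{0, w_i(u) − Σ_{v∈N⁺(u)∩I_i} w_i(v)}, such that w_i(v) > 0 for every v ∈ I_i, and such that Σ_{v∈I_i} w_i(v) ≥ ρ·S*(w_i) for every i, where S*(w′) denotes the supremum of Σ_{v∈V} w′(v)·x_v over all x : V → ℝ≥0 with Σ_{u∈N⁺(v)} x_u ≤ 1 for every v. Then there exists an independent set I of G with Σ_{v∈I} w(v) ≥ (1 − ε)·S*(w). -/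
/-!
Each round loses little LP value. Double counting over the symmetric relation `v ∈ N⁺(u)` shows
`S*(w_i) ≤ S*(w_{i+1}) + w_i(I_i)`, so together with `w_i(I_i) ≥ ρ S*(w_i)` the uncollected part
`S*(w) - Σ_{i ≤ k} w_i(I_i)` shrinks by a factor `1 - ρ` per round and ends below
`(1 - ρ)^T S*(w) ≤ ε S*(w)`.

Conversely the reverse-greedy set collects everything: let `J_{T+1} = ∅` and let `J_i` add to
`J_{i+1}` the vertices of `I_i` whose closed neighbourhood misses `J_{i+1}`. Every vertex of
`J_{i+1}` keeps positive residual weight, so the `max` in the update is inactive there and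
`w_i(J_{i+1}) = w_{i+1}(J_{i+1}) + Σ_{u ∈ J_{i+1}} w_i(N⁺(u) ∩ I_i)`; the last sum pays for the
discarded vertices of `I_i`. Hence `w_i(J_i) ≥ w_i(I_i) + w_{i+1}(J_{i+1})`, and telescoping gives
`w(J_1) ≥ Σ_i w_i(I_i)`.
-/

open Finset

section LPopt

variable {V : Type*} [Fintype V] (G : SimpleGraph V) [DecidableRel G.Adj]

theorem le_LPopt (w : V → ℝ) {x : V → ℝ} (hx0 : ∀ v, 0 ≤ x v)
    (hx1 : ∀ v, x v + ∑ u ∈ G.neighborFinset v, x u ≤ 1) :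
    ∑ v, w v * x v ≤ LPopt G w := by
  refine le_csSup ⟨∑ v, |w v|, ?_⟩ ⟨x, hx0, hx1, rfl⟩
  rintro t ⟨y, hy0, hy1, rfl⟩
  refine sum_le_sum fun v _ => ?_
  have hy : y v ≤ 1 := (le_add_of_nonneg_right (sum_nonneg fun u _ => hy0 u)).trans (hy1 v)
  calc w v * y v ≤ |w v| * y v := mul_le_mul_of_nonneg_right (le_abs_self _) (hy0 v)
    _ ≤ |w v| := mul_le_of_le_one_right (abs_nonneg _) hy

theorem LPopt_nonneg (w : V → ℝ) : 0 ≤ LPopt G w := by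
  simpa using le_LPopt G w (x := 0) (fun _ => le_rfl) (fun _ => by simp)

theorem LPopt_le {w : V → ℝ} {c : ℝ}
    (h : ∀ x : V → ℝ, (∀ v, 0 ≤ x v) → (∀ v, x v + ∑ u ∈ G.neighborFinset v, x u ≤ 1) →
      ∑ v, w v * x v ≤ c) :
    LPopt G w ≤ c :=
  csSup_le ⟨0, 0, fun _ => le_rfl, fun _ => by simp, by simp⟩ <| by
    rintro t ⟨x, hx0, hx1, rfl⟩
    exact h x hx0 hx1

end LPopt

namespace SimpleGraph

variable {V : Type*} [Fintype V] [DecidableEq V] (G : SimpleGraph V) [DecidableRel G.Adj]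

theorem sum_sum_insert_neighborFinset_inter_comm {M : Type*} [AddCommMonoid M]
    (s t : Finset V) (f : V → V → M) :
    ∑ u ∈ s, ∑ v ∈ insert u (G.neighborFinset u) ∩ t, f u v =
      ∑ v ∈ t, ∑ u ∈ insert v (G.neighborFinset v) ∩ s, f u v :=
  sum_comm' fun u v => by
    simp only [mem_inter, mem_insert, mem_neighborFinset, eq_comm (a := u), G.adj_comm u v]
    tauto

theorem LPopt_le_LPopt_add_sum {w w' : V → ℝ} {S : Finset V} (hS : ∀ v ∈ S, 0 ≤ w v)
    (hw' : ∀ u, w u - ∑ v ∈ insert u (G.neighborFinset u) ∩ S, w v ≤ w' u) :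
    LPopt G w ≤ LPopt G w' + ∑ v ∈ S, w v := by
  refine LPopt_le G fun x hx0 hx1 => ?_
  have hcharge : ∑ u, (∑ v ∈ insert u (G.neighborFinset u) ∩ S, w v) * x u ≤ ∑ v ∈ S, w v := by
    simp_rw [sum_mul]
    rw [sum_sum_insert_neighborFinset_inter_comm]
    refine sum_le_sum fun v hv => ?_
    rw [inter_univ, ← mul_sum, sum_insert (G.notMem_neighborFinset_self v)]
    exact mul_le_of_le_one_right (hS v hv) (hx1 v)
  calc ∑ u, w u * x u
      = ∑ u, (w u - ∑ v ∈ insert u (G.neighborFinset u) ∩ S, w v) * x u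
        + ∑ u, (∑ v ∈ insert u (G.neighborFinset u) ∩ S, w v) * x u := by
        rw [← sum_add_distrib]
        exact sum_congr rfl fun u _ => by ring
    _ ≤ ∑ u, w' u * x u + ∑ v ∈ S, w v :=
        add_le_add (sum_le_sum fun u _ => mul_le_mul_of_nonneg_right (hw' u) (hx0 u)) hcharge
    _ ≤ LPopt G w' + ∑ v ∈ S, w v := by grw [le_LPopt G w' hx0 hx1]

theorem sum_filter_not_disjoint_insert_neighborFinset_le {w : V → ℝ} {J S : Finset V}
    (hS : ∀ v ∈ S, 0 ≤ w v) :
    ∑ v ∈ S with ¬Disjoint (insert v (G.neighborFinset v)) J, w v ≤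
      ∑ u ∈ J, ∑ v ∈ insert u (G.neighborFinset u) ∩ S, w v := by
  rw [sum_sum_insert_neighborFinset_inter_comm, sum_filter]
  refine sum_le_sum fun v hv => ?_
  rw [sum_const]
  split_ifs with hvJ
  · exact nsmul_nonneg (hS v hv) _
  · rw [not_disjoint_iff_nonempty_inter] at hvJ
    exact le_smul_of_one_le_left (hS v hv) (one_le_card.mpr hvJ)

theorem exists_isIndepSet_sum_add_sum_le {J S : Finset V} {w w' : V → ℝ}
    (hJ : G.IsIndepSet (J : Set V)) (hS : G.IsIndepSet (S : Set V))
    (hSpos : ∀ v ∈ S, 0 < w v) (hJpos : ∀ u ∈ J, 0 < w' u)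
    (hw' : ∀ u ∈ J, w' u = max 0 (w u - ∑ v ∈ insert u (G.neighborFinset u) ∩ S, w v)) :
    ∃ J' : Finset V, G.IsIndepSet (J' : Set V) ∧ (∀ u ∈ J', 0 < w u) ∧
      ∑ v ∈ S, w v + ∑ u ∈ J, w' u ≤ ∑ u ∈ J', w u := by
  set A := S.filter fun v => Disjoint (insert v (G.neighborFinset v)) J
  have hmemA : ∀ v, v ∈ A ↔ v ∈ S ∧ Disjoint (insert v (G.neighborFinset v)) J :=
    fun v => mem_filter
  have hSnn : ∀ v ∈ S, 0 ≤ w v := fun v hv => (hSpos v hv).le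
  have hresidual : ∀ u ∈ J,
      w u = w' u + ∑ v ∈ insert u (G.neighborFinset u) ∩ S, w v := by
    intro u hu
    have hslack := hJpos u hu
    rw [hw' u hu, lt_max_iff, lt_self_iff_false, false_or] at hslack
    rw [hw' u hu, max_eq_right hslack.le]
    ring
  have hAJ : Disjoint J A := Finset.disjoint_left.mpr fun u hu hA =>
    Finset.disjoint_left.mp ((hmemA u).mp hA).2 (mem_insert_self u _) hu
  refine ⟨J ∪ A, ?_, ?_, ?_⟩
  · rw [coe_union, isIndepSet_iff, Set.pairwise_union]
    refine ⟨hJ, hS.mono (filter_subset _ _), fun u hu v hv _ => ?_⟩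
    have huv : u ∉ insert v (G.neighborFinset v) :=
      Finset.disjoint_right.mp ((hmemA v).mp hv).2 hu
    rw [mem_insert, mem_neighborFinset, not_or] at huv
    exact ⟨fun h => huv.2 h.symm, huv.2⟩
  · intro u hu
    rcases mem_union.mp hu with hu | hu
    · rw [hresidual u hu]
      exact add_pos_of_pos_of_nonneg (hJpos u hu)
        (sum_nonneg fun v hv => hSnn v (mem_inter.mp hv).2)
    · exact hSpos u ((hmemA u).mp hu).1
  · rw [sum_union hAJ, sum_congr rfl hresidual, sum_add_distrib,
      ← sum_filter_add_sum_filter_not S fun v => Disjoint (insert v (G.neighborFinset v)) J]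
    linarith [G.sum_filter_not_disjoint_insert_neighborFinset_le (J := J) hSnn]

theorem exists_isIndepSet_sum_Icc_le {I : ℕ → Finset V} {W : ℕ → V → ℝ} {T : ℕ} (a : ℕ)
    (hind : ∀ i ∈ Icc a T, G.IsIndepSet (I i : Set V))
    (hW : ∀ i ∈ Icc a T, ∀ u,
      W (i + 1) u = max 0 (W i u - ∑ v ∈ insert u (G.neighborFinset u) ∩ I i, W i v))
    (hpos : ∀ i ∈ Icc a T, ∀ v ∈ I i, 0 < W i v) :
    ∃ J : Finset V, G.IsIndepSet (J : Set V) ∧ (∀ u ∈ J, 0 < W a u) ∧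
      ∑ i ∈ Icc a T, ∑ v ∈ I i, W i v ≤ ∑ u ∈ J, W a u := by
  by_cases haT : T < a
  · exact ⟨∅, by simp, by simp, by simp [Icc_eq_empty_of_lt haT]⟩
  have ha : a ∈ Icc a T := by simp only [mem_Icc]; omega
  have hsub : Icc (a + 1) T ⊆ Icc a T := Icc_subset_Icc_left (by omega)
  obtain ⟨J, hJ, hJpos, hJsum⟩ := exists_isIndepSet_sum_Icc_le (a + 1)
    (fun i hi => hind i (hsub hi)) (fun i hi => hW i (hsub hi)) (fun i hi => hpos i (hsub hi))
  obtain ⟨J', hJ', hJ'pos, hJ'sum⟩ :=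
    G.exists_isIndepSet_sum_add_sum_le hJ (hind a ha) (hpos a ha) hJpos fun u _ => hW a ha u
  refine ⟨J', hJ', hJ'pos, ?_⟩
  rw [← add_sum_Ioc_eq_sum_Icc (by omega), ← Icc_add_one_left_eq_Ioc]
  linarith
termination_by T + 1 - a

end SimpleGraph

theorem sub_sum_Icc_le_one_sub_pow_mul {L g : ℕ → ℝ} {ρ : ℝ} (hρ0 : 0 ≤ ρ) (hρ1 : ρ ≤ 1)
    {n : ℕ} (hL : ∀ i ∈ Icc 1 n, L i ≤ L (i + 1) + g i) (hg : ∀ i ∈ Icc 1 n, ρ * L i ≤ g i) :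
    L 1 - ∑ i ∈ Icc 1 n, g i ≤ (1 - ρ) ^ n * L 1 := by
  suffices h : ∀ k ≤ n, L 1 - ∑ i ∈ Icc 1 k, g i ≤ L (k + 1) ∧
      L 1 - ∑ i ∈ Icc 1 k, g i ≤ (1 - ρ) ^ k * L 1 from (h n le_rfl).2
  intro k hk
  induction k with
  | zero => simp
  | succ k ih =>
    obtain ⟨hLk, hpow⟩ := ih (by omega)
    have hk : k + 1 ∈ Icc 1 n := by simp only [mem_Icc]; omega
    have hLstep := hL (k + 1) hk
    have hgstep := hg (k + 1) hk
    rw [sum_Icc_succ_top (by omega)]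
    refine ⟨by linarith, ?_⟩
    calc L 1 - (∑ i ∈ Icc 1 k, g i + g (k + 1))
        ≤ (1 - ρ) * (L 1 - ∑ i ∈ Icc 1 k, g i) := by
          linarith [mul_le_mul_of_nonneg_left hLk hρ0]
      _ ≤ (1 - ρ) * ((1 - ρ) ^ k * L 1) := mul_le_mul_of_nonneg_left hpow (by linarith)
      _ = (1 - ρ) ^ (k + 1) * L 1 := by ring

theorem one_sub_pow_le_of_log_inv_div_le {ρ ε : ℝ} {T : ℕ} (hρ0 : 0 < ρ) (hρ1 : ρ ≤ 1)
    (hε : 0 < ε) (hT : Real.log (1 / ε) / ρ ≤ T) :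
    (1 - ρ) ^ T ≤ ε := by
  have hlog : -Real.log ε ≤ ρ * T := by
    rwa [div_le_iff₀ hρ0, one_div, Real.log_inv, mul_comm] at hT
  calc (1 - ρ) ^ T ≤ Real.exp (-ρ) ^ T :=
        pow_le_pow_left₀ (by linarith) (Real.one_sub_le_exp_neg ρ) T
    _ = Real.exp (-(ρ * T)) := by rw [← Real.exp_nat_mul]; ring_nf
    _ ≤ Real.exp (Real.log ε) := Real.exp_le_exp.mpr (by linarith)
    _ = ε := Real.exp_log hε

theorem local_ratio_boosting_general
    {V : Type*} [Fintype V] [DecidableEq V] (G : SimpleGraph V) [DecidableRel G.Adj]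
    (w : V → ℝ)
    (ρ ε : ℝ) (hρ0 : 0 < ρ) (hρ1 : ρ < 1) (hε0 : 0 < ε)
    (T : ℕ) (hT : Real.log (1 / ε) / ρ ≤ (T : ℝ))
    (I : ℕ → Finset V)
    (hind : ∀ i ∈ Finset.Icc 1 T, ∀ u ∈ I i, ∀ v ∈ I i, ¬ G.Adj u v)
    (W : ℕ → V → ℝ) (hW1 : ∀ v, W 1 v = w v)
    (hWstep : ∀ i ∈ Finset.Icc 1 T, ∀ u : V,
      W (i + 1) u =
        max 0 (W i u - ∑ v ∈ (insert u (G.neighborFinset u)) ∩ I i, W i v))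
    (hpos : ∀ i ∈ Finset.Icc 1 T, ∀ v ∈ I i, 0 < W i v)
    (hfrac : ∀ i ∈ Finset.Icc 1 T, ∑ v ∈ I i, W i v ≥ ρ * LPopt G (W i)) :
    ∃ J : Finset V, (∀ u ∈ J, ∀ v ∈ J, ¬ G.Adj u v) ∧
      ∑ v ∈ J, w v ≥ (1 - ε) * LPopt G w := by
  obtain ⟨J, hJ, -, hJsum⟩ := G.exists_isIndepSet_sum_Icc_le 1
    (fun i hi u hu v hv _ => hind i hi u hu v hv) hWstep hpos
  have hdecay := sub_sum_Icc_le_one_sub_pow_mul (L := fun i => LPopt G (W i)) hρ0.le hρ1.le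
    (fun i hi => G.LPopt_le_LPopt_add_sum (fun v hv => (hpos i hi v hv).le)
      fun u => (hWstep i hi u).symm ▸ le_max_right _ _) hfrac
  have hpow := one_sub_pow_le_of_log_inv_div_le hρ0 hρ1.le hε0 hT
  have hW1' : W 1 = w := funext hW1
  rw [hW1'] at hJsum hdecay
  refine ⟨J, fun u hu v hv huv => hJ hu hv (G.ne_of_adj huv) huv, ?_⟩
  linarith [mul_le_mul_of_nonneg_right hpow (LPopt_nonneg G w)]

/-- Boosting lemma of the local-ratio scheme: if each selected
independent set `I_i` captures at least a `ρ`-fraction of the current residual LP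
optimum, then after `T ≥ ln(1/ε)/ρ` iterations there is an independent set of
weight at least `(1 − ε)·S*(w)`. -/
theorem local_ratio_boosting
    {V : Type*} [Fintype V] [DecidableEq V] (G : SimpleGraph V) [DecidableRel G.Adj]
    (w : V → ℝ) (hw : ∀ v, 0 ≤ w v)
    (ρ ε : ℝ) (hρ0 : 0 < ρ) (hρ1 : ρ < 1) (hε0 : 0 < ε) (hε1 : ε < 1)
    (T : ℕ) (hT : Real.log (1 / ε) / ρ ≤ (T : ℝ))
    (I : ℕ → Finset V)
    (hind : ∀ i ∈ Finset.Icc 1 T, ∀ u ∈ I i, ∀ v ∈ I i, ¬ G.Adj u v)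
    (W : ℕ → V → ℝ) (hW1 : ∀ v, W 1 v = w v)
    (hWstep : ∀ i ∈ Finset.Icc 1 T, ∀ u : V,
      W (i + 1) u =
        max 0 (W i u - ∑ v ∈ (insert u (G.neighborFinset u)) ∩ I i, W i v))
    (hpos : ∀ i ∈ Finset.Icc 1 T, ∀ v ∈ I i, 0 < W i v)
    (hfrac : ∀ i ∈ Finset.Icc 1 T, ∑ v ∈ I i, W i v ≥ ρ * LPopt G (W i)) :
    ∃ J : Finset V, (∀ u ∈ J, ∀ v ∈ J, ¬ G.Adj u v) ∧
      ∑ v ∈ J, w v ≥ (1 - ε) * LPopt G w :=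
  local_ratio_boosting_general G w ρ ε hρ0 hρ1 hε0 T hT I hind W hW1 hWstep hpos hfrac
end

section
/- Every finite simple graph G = (V,E) with strictly positive vertex weights w : V → ℝ>0 contains an independent set I with Σ_{v∈I} w(v) ≥ (1/2)·Σ_{v∈V} w(v)² / w(N⁺(v)), where w(N⁺(v)) = Σ_{u∈N⁺(v)} w(u) and N⁺(v) = {v} ∪ N(v) is the closed neighborhood of v. -/
/-!
Greedy argument, which even gives the bound without the factor `1/2`. Restricting the sum to
an induced subgraph on `S`, pick `v ∈ S` maximising `w v / w(N⁺(v) ∩ S)`, put it in the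
independent set and delete `N⁺(v)`. The deleted terms `w u ^ 2 / w(N⁺(u) ∩ S)` are each at most
`w u · w v / w(N⁺(v) ∩ S)`, so together at most `w v`; the surviving terms only grow, since
their denominators shrink.
-/

open Finset

namespace SimpleGraph

variable {V : Type*} [Fintype V] [DecidableEq V] (G : SimpleGraph V) [DecidableRel G.Adj]
  (w : V → ℝ)

/-- `w(N⁺(v) ∩ S)`, the weight of the closed neighbourhood of `v ∈ S` in `G.induce S`. -/
noncomputable def closedNbhdWeight (S : Finset V) (v : V) : ℝ :=
  w v + ∑ u ∈ G.neighborFinset v ∩ S, w u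

noncomputable def caroWeiSum (S : Finset V) : ℝ :=
  ∑ v ∈ S, w v ^ 2 / G.closedNbhdWeight w S v

variable {G w} {S T : Finset V} {v : V}

lemma le_closedNbhdWeight (hw : ∀ v, 0 ≤ w v) (S : Finset V) (v : V) :
    w v ≤ G.closedNbhdWeight w S v :=
  le_add_of_nonneg_right (sum_nonneg fun u _ ↦ hw u)

lemma closedNbhdWeight_mono (hw : ∀ v, 0 ≤ w v) (h : S ⊆ T) (v : V) :
    G.closedNbhdWeight w S v ≤ G.closedNbhdWeight w T v :=
  add_le_add_right (sum_le_sum_of_subset_of_nonneg (inter_subset_inter_left h)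
    fun u _ _ ↦ hw u) _

lemma sq_div_closedNbhdWeight_anti (hw : ∀ v, 0 ≤ w v) (h : S ⊆ T) (v : V) :
    w v ^ 2 / G.closedNbhdWeight w T v ≤ w v ^ 2 / G.closedNbhdWeight w S v := by
  rcases (hw v).eq_or_lt with hv | hv
  · simp [← hv]
  · exact div_le_div_of_nonneg_left (sq_nonneg _) (hv.trans_le (le_closedNbhdWeight hw S v))
      (closedNbhdWeight_mono hw h v)

lemma caroWeiSum_nonneg (hw : ∀ v, 0 ≤ w v) (S : Finset V) : 0 ≤ G.caroWeiSum w S :=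
  sum_nonneg fun v _ ↦ div_nonneg (sq_nonneg _) ((hw v).trans (le_closedNbhdWeight hw S v))

lemma sum_inter_insert_neighborFinset (hv : v ∈ S) :
    ∑ u ∈ S ∩ insert v (G.neighborFinset v), w u = G.closedNbhdWeight w S v := by
  rw [inter_comm, insert_inter_of_mem hv, sum_insert (by simp), closedNbhdWeight]

lemma sum_inter_insert_neighborFinset_sq_div_le (hw : ∀ v, 0 ≤ w v) (hv : v ∈ S)
    (hmax : ∀ u ∈ S, w u / G.closedNbhdWeight w S u ≤ w v / G.closedNbhdWeight w S v) :
    ∑ u ∈ S ∩ insert v (G.neighborFinset v), w u ^ 2 / G.closedNbhdWeight w S u ≤ w v :=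
  calc _ ≤ ∑ u ∈ S ∩ insert v (G.neighborFinset v), w u * (w v / G.closedNbhdWeight w S v) := by
        gcongr with u hu
        rw [sq, mul_div_assoc]
        exact mul_le_mul_of_nonneg_left (hmax u (mem_inter.1 hu).1) (hw u)
    _ = w v := by
        rw [← sum_mul, sum_inter_insert_neighborFinset hv]
        exact mul_div_cancel_of_imp' fun h ↦ le_antisymm (h ▸ le_closedNbhdWeight hw S v) (hw v)

lemma caroWeiSum_le_add_caroWeiSum_sdiff (hw : ∀ v, 0 ≤ w v) (hv : v ∈ S)
    (hmax : ∀ u ∈ S, w u / G.closedNbhdWeight w S u ≤ w v / G.closedNbhdWeight w S v) :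
    G.caroWeiSum w S ≤ w v + G.caroWeiSum w (S \ insert v (G.neighborFinset v)) := by
  rw [caroWeiSum, ← sum_inter_add_sum_sdiff S (insert v (G.neighborFinset v))]
  exact add_le_add (sum_inter_insert_neighborFinset_sq_div_le hw hv hmax)
    (sum_le_sum fun u _ ↦ sq_div_closedNbhdWeight_anti hw sdiff_subset u)

lemma IsIndepSet.insert_of_forall_notMem_neighborFinset {I : Finset V}
    (hI : G.IsIndepSet (I : Set V)) (hv : ∀ u ∈ I, u ∉ G.neighborFinset v) :
    G.IsIndepSet (insert v I : Finset V) := by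
  rw [coe_insert]
  have hvu : ∀ u ∈ I, ¬G.Adj v u := fun u hu h ↦ hv u hu ((G.mem_neighborFinset v u).2 h)
  exact hI.insert fun u hu _ ↦ ⟨hvu u hu, fun h ↦ hvu u hu h.symm⟩

theorem exists_isIndepSet_caroWeiSum_le (hw : ∀ v, 0 ≤ w v) (S : Finset V) :
    ∃ I ⊆ S, G.IsIndepSet (I : Set V) ∧ G.caroWeiSum w S ≤ ∑ v ∈ I, w v := by
  induction S using Finset.strongInduction with
  | H S ih =>
  rcases S.eq_empty_or_nonempty with rfl | hne
  · exact ⟨∅, subset_rfl, by simp, by simp [caroWeiSum]⟩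
  obtain ⟨v, hv, hmax⟩ := S.exists_max_image (fun u ↦ w u / G.closedNbhdWeight w S u) hne
  set N := insert v (G.neighborFinset v)
  have hvN : v ∈ N := mem_insert_self _ _
  obtain ⟨I, hIS, hI, hsum⟩ := ih (S \ N) <|
    (ssubset_iff_of_subset sdiff_subset).2 ⟨v, hv, fun h ↦ (mem_sdiff.1 h).2 hvN⟩
  have hIN : ∀ u ∈ I, u ∉ N := fun u hu ↦ (mem_sdiff.1 (hIS hu)).2
  refine ⟨insert v I, insert_subset hv (hIS.trans sdiff_subset),
    hI.insert_of_forall_notMem_neighborFinset fun u hu ↦ (hIN u hu <| mem_insert_of_mem ·), ?_⟩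
  rw [sum_insert fun h ↦ hIN v h hvN]
  linarith [caroWeiSum_le_add_caroWeiSum_sdiff hw hv hmax]

end SimpleGraph

/-- Weighted Caro–Wei within a factor 1/2: every finite simple graph
with strictly positive vertex weights contains an independent set of weight at
least `(1/2)·Σ_v w(v)²/w(N⁺(v))`. -/
theorem exists_independent_set_half_caro_wei
    {V : Type*} [Fintype V] (G : SimpleGraph V) [DecidableRel G.Adj]
    (w : V → ℝ) (hw : ∀ v, 0 < w v) :
    ∃ I : Finset V, (∀ u ∈ I, ∀ v ∈ I, ¬ G.Adj u v) ∧
      ∑ v ∈ I, w v ≥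
        (1 / 2) * ∑ v, (w v) ^ 2 / (w v + ∑ u ∈ G.neighborFinset v, w u) := by
  classical
  have hw₀ : ∀ v, 0 ≤ w v := fun v ↦ (hw v).le
  obtain ⟨I, -, hI, hsum⟩ := G.exists_isIndepSet_caroWeiSum_le hw₀ univ
  refine ⟨I, fun u hu v hv ↦ ?_, ?_⟩
  · rcases eq_or_ne u v with rfl | huv
    · exact G.irrefl
    · exact hI hu hv huv
  · have hnonneg := G.caroWeiSum_nonneg hw₀ univ
    simp only [SimpleGraph.caroWeiSum, SimpleGraph.closedNbhdWeight, inter_univ] at hsum hnonneg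
    linarith
end

section
/- Let G = (V,E) be a finite simple graph with vertex weights w : V → ℝ≥0 and let ε ∈ (0,1). For every x : V → ℝ≥0 satisfying Σ_{u∈N⁺(v)} x_u ≤ 1 for every vertex v (where N⁺(v) = {v} ∪ N(v)), there exists an independent set I of G with Σ_{v∈I} w(v) ≥ (1 − ε)·Σ_{v∈V} w(v)·x_v. -/
/-!
Greedy rounding: take a heaviest vertex `v`, put it into the independent set and delete its
closed neighbourhood `N⁺(v)`. Every vertex of `N⁺(v)` weighs at most `w v` and the LP mass
`x` on `N⁺(v)` is at most `1`, so the part of the LP objective deleted with `N⁺(v)` is at most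
`w v`. Hence the greedy independent set already weighs at least the full LP objective.
-/

open Finset

namespace SimpleGraph

variable {V : Type*} [Fintype V] [DecidableEq V] (G : SimpleGraph V) [DecidableRel G.Adj]

theorem sum_closedNeighborFinset {M : Type*} [AddCommMonoid M] (f : V → M) (v : V) :
    ∑ u ∈ G.closedNeighborFinset v, f u = f v + ∑ u ∈ G.neighborFinset v, f u :=
  sum_insert (G.notMem_neighborFinset_self v)

theorem sum_inter_closedNeighborFinset_mul_le {w x : V → ℝ} (hx0 : ∀ v, 0 ≤ x v)
    {S : Finset V} {v : V} (hwv : 0 ≤ w v) (hmax : ∀ u ∈ S, w u ≤ w v)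
    (hfeas : x v + ∑ u ∈ G.neighborFinset v, x u ≤ 1) :
    ∑ u ∈ S ∩ G.closedNeighborFinset v, w u * x u ≤ w v :=
  calc ∑ u ∈ S ∩ G.closedNeighborFinset v, w u * x u
      ≤ ∑ u ∈ S ∩ G.closedNeighborFinset v, w v * x u :=
        sum_le_sum fun u hu => mul_le_mul_of_nonneg_right (hmax u (mem_inter.1 hu).1) (hx0 u)
    _ ≤ ∑ u ∈ G.closedNeighborFinset v, w v * x u :=
        sum_le_sum_of_subset_of_nonneg inter_subset_right fun u _ _ => mul_nonneg hwv (hx0 u)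
    _ = w v * (x v + ∑ u ∈ G.neighborFinset v, x u) := by
        rw [← mul_sum, sum_closedNeighborFinset]
    _ ≤ w v := mul_le_of_le_one_right hwv hfeas

theorem exists_isIndepSet_subset_sum_mul_le {w x : V → ℝ} (hw : ∀ v, 0 ≤ w v)
    (hx0 : ∀ v, 0 ≤ x v) (hfeas : ∀ v, x v + ∑ u ∈ G.neighborFinset v, x u ≤ 1)
    (S : Finset V) :
    ∃ I ⊆ S, G.IsIndepSet (I : Set V) ∧ ∑ v ∈ S, w v * x v ≤ ∑ v ∈ I, w v := by
  induction S using Finset.strongInduction with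
  | H S ih =>
    rcases S.eq_empty_or_nonempty with rfl | hS
    · exact ⟨∅, empty_subset _, by simp, by simp⟩
    obtain ⟨v, hvS, hmax⟩ := S.exists_max_image w hS
    have hv_closed : v ∈ G.closedNeighborFinset v := mem_insert_self _ _
    obtain ⟨I, hIS, hI, hIsum⟩ :=
      ih _ (sdiff_lt_left.2 (not_disjoint_iff.2 ⟨v, hv_closed, hvS⟩))
    have hv_nonadj : ∀ u ∈ I, v ≠ u → ¬G.Adj v u ∧ ¬G.Adj u v := fun u hu _ => by
      have hu_far : u ∉ G.closedNeighborFinset v := (mem_sdiff.1 (hIS hu)).2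
      have hvu : ¬G.Adj v u := fun h => hu_far (mem_insert_of_mem ((G.mem_neighborFinset v u).2 h))
      exact ⟨hvu, fun h => hvu h.symm⟩
    have hv_notin : v ∉ I := fun hv => (mem_sdiff.1 (hIS hv)).2 hv_closed
    refine ⟨insert v I, insert_subset hvS (hIS.trans sdiff_subset), ?_, ?_⟩
    · rw [coe_insert, isIndepSet_iff]
      exact hI.insert hv_nonadj
    · calc ∑ u ∈ S, w u * x u
          = ∑ u ∈ S ∩ G.closedNeighborFinset v, w u * x u
            + ∑ u ∈ S \ G.closedNeighborFinset v, w u * x u :=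
            (sum_inter_add_sum_sdiff _ _ _).symm
        _ ≤ w v + ∑ u ∈ I, w u :=
            add_le_add (G.sum_inter_closedNeighborFinset_mul_le hx0 (hw v) hmax (hfeas v)) hIsum
        _ = ∑ u ∈ insert v I, w u := (sum_insert hv_notin).symm

end SimpleGraph

theorem exists_independent_set_lp_rounding_general
    {V : Type*} [Fintype V] (G : SimpleGraph V) [DecidableRel G.Adj]
    (w : V → ℝ) (hw : ∀ v, 0 ≤ w v)
    (ε : ℝ) (hε0 : 0 < ε)
    (x : V → ℝ) (hx0 : ∀ v, 0 ≤ x v)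
    (hfeas : ∀ v, x v + ∑ u ∈ G.neighborFinset v, x u ≤ 1) :
    ∃ I : Finset V, (∀ u ∈ I, ∀ v ∈ I, ¬ G.Adj u v) ∧
      ∑ v ∈ I, w v ≥ (1 - ε) * ∑ v, w v * x v := by
  classical
  obtain ⟨I, -, hI, hIsum⟩ := G.exists_isIndepSet_subset_sum_mul_le hw hx0 hfeas univ
  have hLP : 0 ≤ ∑ v, w v * x v := sum_nonneg fun v _ => mul_nonneg (hw v) (hx0 v)
  refine ⟨I, fun u hu v hv huv => ?_, ?_⟩
  · exact hI hu hv (G.ne_of_adj huv) huv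
  · calc (1 - ε) * ∑ v, w v * x v ≤ ∑ v, w v * x v :=
          mul_le_of_le_one_left hLP (by linarith)
      _ ≤ ∑ v ∈ I, w v := hIsum

/-- For every feasible solution `x` of the fractional independent set
LP with closed-neighborhood constraints and every `ε ∈ (0,1)`, there is an
independent set of weight at least `(1 − ε)` times the LP objective of `x`. -/
theorem exists_independent_set_lp_rounding
    {V : Type*} [Fintype V] (G : SimpleGraph V) [DecidableRel G.Adj]
    (w : V → ℝ) (hw : ∀ v, 0 ≤ w v)
    (ε : ℝ) (hε0 : 0 < ε) (hε1 : ε < 1)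
    (x : V → ℝ) (hx0 : ∀ v, 0 ≤ x v)
    (hfeas : ∀ v, x v + ∑ u ∈ G.neighborFinset v, x u ≤ 1) :
    ∃ I : Finset V, (∀ u ∈ I, ∀ v ∈ I, ¬ G.Adj u v) ∧
      ∑ v ∈ I, w v ≥ (1 - ε) * ∑ v, w v * x v :=
  exists_independent_set_lp_rounding_general G w hw ε hε0 x hx0 hfeas
end
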